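/- arXiv:2507.18306 — 4 statements merged into one kernel-verified Lean document; each statement's English description precedes it below -/
import Mathlib

section
/- Let s, t and k be positive integers with t ≥ s and k ≥ 2. If k + 1 ≤ s ≤ 3k − 2, then the k-coalition number of the complete bipartite graph K_{s,t} satisfies C_k(K_{s,t}) = t − k + 3. -/
open SimpleGraph

/-- A set `S` is a `k`-dominating set of `G` if every vertex outside `S`
has at least `k` neighbors in `S`. -/
def KDominatingSet {V : Type*} (G : SimpleGraph V) (k : ℕ) (S : Set V) : Prop :=
  ∀ v ∉ S, k ≤ (S ∩ G.neighborSet v).ncard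

/-- Two disjoint sets `A` and `B` form a `k`-coalition in `G` if neither is a
`k`-dominating set of `G` but their union is. -/
def KCoalition {V : Type*} (G : SimpleGraph V) (k : ℕ) (A B : Set V) : Prop :=
  Disjoint A B ∧ ¬ KDominatingSet G k A ∧ ¬ KDominatingSet G k B ∧
    KDominatingSet G k (A ∪ B)

/-- A `k`-coalition partition of `G` is a partition of the vertex set in which every
part is either a `k`-dominating set of cardinality `k` or forms a `k`-coalition with
another part. -/
def KCoalitionPartition {V : Type*} (G : SimpleGraph V) (k : ℕ) (P : Finset (Set V)) : Prop :=
  (∀ A ∈ P, A.Nonempty) ∧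
  (P : Set (Set V)).PairwiseDisjoint id ∧
  (⋃ A ∈ P, A) = (Set.univ : Set V) ∧
  ∀ A ∈ P, (KDominatingSet G k A ∧ A.ncard = k) ∨
    ∃ B ∈ P, B ≠ A ∧ KCoalition G k A B

/-- The `k`-coalition number of `G`: the maximum cardinality of a
`k`-coalition partition of `G`. -/
noncomputable def kCoalitionNumber {V : Type*} (G : SimpleGraph V) (k : ℕ) : ℕ :=
  sSup {n | ∃ P : Finset (Set V), KCoalitionPartition G k P ∧ P.card = n}

set_option maxHeartbeats 1000000

namespace CkAux

variable {s t : ℕ}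

def L (s t : ℕ) : Set (Fin s ⊕ Fin t) := Set.range Sum.inl
def R (s t : ℕ) : Set (Fin s ⊕ Fin t) := Set.range Sum.inr

noncomputable def lc (S : Set (Fin s ⊕ Fin t)) : ℕ := (S ∩ L s t).ncard
noncomputable def rc (S : Set (Fin s ⊕ Fin t)) : ℕ := (S ∩ R s t).ncard

lemma ncard_L : (L s t).ncard = s := by
  rw [L, ← Set.image_univ, Set.ncard_image_of_injective _ Sum.inl_injective,
    Set.ncard_univ, Nat.card_eq_fintype_card, Fintype.card_fin]

lemma ncard_R : (R s t).ncard = t := by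
  rw [R, ← Set.image_univ, Set.ncard_image_of_injective _ Sum.inr_injective,
    Set.ncard_univ, Nat.card_eq_fintype_card, Fintype.card_fin]

lemma L_union_R : L s t ∪ R s t = Set.univ := by
  ext v; cases v with
  | inl a => simp [L, R]
  | inr b => simp [L, R]

lemma disjoint_L_R : Disjoint (L s t) (R s t) := by
  rw [Set.disjoint_iff_inter_eq_empty]
  ext v; cases v <;> simp [L, R]

lemma lc_of_L_subset {S : Set (Fin s ⊕ Fin t)} (h : L s t ⊆ S) : lc S = s := by
  rw [lc, Set.inter_eq_self_of_subset_right h, ncard_L]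

lemma rc_of_R_subset {S : Set (Fin s ⊕ Fin t)} (h : R s t ⊆ S) : rc S = t := by
  rw [rc, Set.inter_eq_self_of_subset_right h, ncard_R]

lemma lc_add_rc (S : Set (Fin s ⊕ Fin t)) : lc S + rc S = S.ncard := by
  rw [lc, rc, ← Set.ncard_union_eq
    (disjoint_L_R.mono Set.inter_subset_right Set.inter_subset_right)
    (Set.toFinite _) (Set.toFinite _), ← Set.inter_union_distrib_left, L_union_R,
    Set.inter_univ]

lemma lc_union {A B : Set (Fin s ⊕ Fin t)} (h : Disjoint A B) :
    lc (A ∪ B) = lc A + lc B := by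
  rw [lc, Set.union_inter_distrib_right, Set.ncard_union_eq
    (h.mono Set.inter_subset_left Set.inter_subset_left) (Set.toFinite _) (Set.toFinite _)]
  rfl

lemma rc_union {A B : Set (Fin s ⊕ Fin t)} (h : Disjoint A B) :
    rc (A ∪ B) = rc A + rc B := by
  rw [rc, Set.union_inter_distrib_right, Set.ncard_union_eq
    (h.mono Set.inter_subset_left Set.inter_subset_left) (Set.toFinite _) (Set.toFinite _)]
  rfl

lemma lc_eq_zero {S : Set (Fin s ⊕ Fin t)} : lc S = 0 ↔ S ∩ L s t = ∅ := by
  rw [lc, Set.ncard_eq_zero (Set.toFinite _)]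

lemma rc_eq_zero {S : Set (Fin s ⊕ Fin t)} : rc S = 0 ↔ S ∩ R s t = ∅ := by
  rw [rc, Set.ncard_eq_zero (Set.toFinite _)]

lemma neighborSet_inl (a : Fin s) :
    (completeBipartiteGraph (Fin s) (Fin t)).neighborSet (Sum.inl a) = R s t := by
  ext w; cases w <;> simp [SimpleGraph.neighborSet, R]

lemma neighborSet_inr (b : Fin t) :
    (completeBipartiteGraph (Fin s) (Fin t)).neighborSet (Sum.inr b) = L s t := by
  ext w; cases w <;> simp [SimpleGraph.neighborSet, L]

lemma kdom_iff {k : ℕ} {S : Set (Fin s ⊕ Fin t)} :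
    KDominatingSet (completeBipartiteGraph (Fin s) (Fin t)) k S ↔
      (L s t ⊆ S ∨ k ≤ rc S) ∧ (R s t ⊆ S ∨ k ≤ lc S) := by
  constructor
  · intro h
    constructor
    · by_cases hL : L s t ⊆ S
      · exact Or.inl hL
      · right
        obtain ⟨v, hv, hvS⟩ := Set.not_subset.mp hL
        obtain ⟨a, rfl⟩ := hv
        have := h _ hvS
        rwa [neighborSet_inl] at this
    · by_cases hR : R s t ⊆ S
      · exact Or.inl hR
      · right
        obtain ⟨v, hv, hvS⟩ := Set.not_subset.mp hR
        obtain ⟨b, rfl⟩ := hv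
        have := h _ hvS
        rwa [neighborSet_inr] at this
  · rintro ⟨h1, h2⟩ v hv
    cases v with
    | inl a =>
      rw [neighborSet_inl]
      rcases h1 with hL | hrc
      · exact absurd (hL ⟨a, rfl⟩) hv
      · exact hrc
    | inr b =>
      rw [neighborSet_inr]
      rcases h2 with hR | hlc
      · exact absurd (hR ⟨b, rfl⟩) hv
      · exact hlc

lemma sum_ncard_inter (P : Finset (Set (Fin s ⊕ Fin t)))
    (hdis : (P : Set (Set (Fin s ⊕ Fin t))).PairwiseDisjoint id)
    (T : Set (Fin s ⊕ Fin t)) :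
    ∑ A ∈ P, (A ∩ T).ncard = ((⋃ A ∈ P, A) ∩ T).ncard := by
  classical
  induction P using Finset.induction_on with
  | empty => simp
  | @insert A P' hA ih =>
    have hdis' : (P' : Set (Set (Fin s ⊕ Fin t))).PairwiseDisjoint id :=
      hdis.subset (by simp [Finset.coe_insert, Set.subset_insert])
    have hAU : Disjoint A (⋃ B ∈ P', B) := by
      rw [Set.disjoint_iUnion_right]
      intro B
      rw [Set.disjoint_iUnion_right]
      intro hB
      exact hdis (by simp) (by simp [hB]) (by rintro rfl; exact hA hB)
    rw [Finset.sum_insert hA, ih hdis', Finset.set_biUnion_insert,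
      Set.union_inter_distrib_right, Set.ncard_union_eq
        (hAU.mono Set.inter_subset_left Set.inter_subset_left)
        (Set.toFinite _) (Set.toFinite _)]

lemma filter_lt_card (n c : ℕ) (h : c ≤ n) :
    (Finset.univ.filter (fun a : Fin n => (a : ℕ) < c)).card = c := by
  have : Finset.univ.filter (fun a : Fin n => (a : ℕ) < c) =
      (Finset.range c).attachFin (fun m hm => lt_of_lt_of_le (Finset.mem_range.mp hm) h) := by
    ext a; simp
  rw [this, Finset.card_attachFin, Finset.card_range]

lemma filter_le_card (n c : ℕ) (h : c ≤ n) :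
    (Finset.univ.filter (fun a : Fin n => c ≤ (a : ℕ))).card = n - c := by
  classical
  have h1 : (Finset.univ.filter (fun a : Fin n => c ≤ (a : ℕ))) =
      Finset.univ \ (Finset.univ.filter (fun a : Fin n => (a : ℕ) < c)) := by
    ext a; simp [not_lt]
  rw [h1, Finset.card_sdiff_of_subset (Finset.filter_subset _ _), filter_lt_card n c h,
    Finset.card_univ, Fintype.card_fin]

lemma ncard_setOf_lt {n : ℕ} (c : ℕ) (h : c ≤ n) : {a : Fin n | (a : ℕ) < c}.ncard = c := by
  classical
  have : {a : Fin n | (a : ℕ) < c} = ↑(Finset.univ.filter (fun a : Fin n => (a : ℕ) < c)) := by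
    ext a; simp
  rw [this, Set.ncard_coe_finset, filter_lt_card n c h]

lemma ncard_setOf_le {n : ℕ} (c : ℕ) (h : c ≤ n) : {a : Fin n | c ≤ (a : ℕ)}.ncard = n - c := by
  classical
  have : {a : Fin n | c ≤ (a : ℕ)} = ↑(Finset.univ.filter (fun a : Fin n => c ≤ (a : ℕ))) := by
    ext a; simp
  rw [this, Set.ncard_coe_finset, filter_le_card n c h]

lemma grouping {α : Type*} [DecidableEq α] (F : Finset α) (f : α → α) (w : α → ℤ) (k : ℤ)
    (h1 : ∀ C ∈ F, k ≤ w C + w (f C)) (h2 : ∀ C ∈ F, w (f C) ≤ k - 1) :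
    (F.card : ℤ) + (F.image f).card * (k - 1) ≤ (∑ C ∈ F, w C) + ∑ D ∈ F.image f, w D := by
  classical
  have step1 : ∑ C ∈ F, (k - w (f C)) ≤ ∑ C ∈ F, w C :=
    Finset.sum_le_sum (fun C hC => by have := h1 C hC; linarith)
  have step2 : ∑ C ∈ F, (k - w (f C)) =
      ∑ D ∈ F.image f, ((F.filter (fun C => f C = D)).card : ℤ) * (k - w D) := by
    rw [Finset.sum_comp (fun D => k - w D) f]
    simp [nsmul_eq_mul]
  have hcard : (F.card : ℤ) = ∑ D ∈ F.image f, ((F.filter (fun C => f C = D)).card : ℤ) := by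
    rw [Finset.card_eq_sum_card_fiberwise (f := f) (t := F.image f)
      (fun C hC => Finset.mem_image_of_mem f hC)]
    push_cast; ring
  have step3 : ∑ D ∈ F.image f, ((k - w D) + (((F.filter (fun C => f C = D)).card : ℤ) - 1)) ≤
      ∑ D ∈ F.image f, ((F.filter (fun C => f C = D)).card : ℤ) * (k - w D) := by
    apply Finset.sum_le_sum
    intro D hD
    obtain ⟨C, hC, rfl⟩ := Finset.mem_image.mp hD
    have hc1 : 1 ≤ ((F.filter (fun C' => f C' = f C)).card : ℤ) := by
      have hm : C ∈ F.filter (fun C' => f C' = f C) := Finset.mem_filter.mpr ⟨hC, rfl⟩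
      have := Finset.card_pos.mpr ⟨C, hm⟩
      exact_mod_cast this
    have hw : 1 ≤ k - w (f C) := by have := h2 C hC; linarith
    nlinarith
  have expand : ∑ D ∈ F.image f, ((k - w D) + (((F.filter (fun C => f C = D)).card : ℤ) - 1)) =
      (F.image f).card * k - (∑ D ∈ F.image f, w D) + (F.card : ℤ) - (F.image f).card := by
    rw [Finset.sum_add_distrib, Finset.sum_sub_distrib, Finset.sum_sub_distrib]
    simp [Finset.sum_const, ← hcard]
    ring
  have := le_trans (le_of_eq expand.symm) (le_trans step3 (le_trans (le_of_eq step2.symm) step1))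
  linarith

lemma upper_bound (s t k : ℕ) (hs : 0 < s) (hst : s ≤ t) (hk : 2 ≤ k)
    (hks : k + 1 ≤ s) (hsk : s + 2 ≤ 3 * k)
    (P : Finset (Set (Fin s ⊕ Fin t)))
    (hP : KCoalitionPartition (completeBipartiteGraph (Fin s) (Fin t)) k P) :
    P.card + k ≤ t + 3 := by
  classical
  obtain ⟨hne, hdis, hcov, hpart⟩ := hP
  have hdisj2 : ∀ A ∈ P, ∀ B ∈ P, A ≠ B → Disjoint A B := by
    intro A hA B hB hAB
    exact hdis (by exact_mod_cast hA) (by exact_mod_cast hB) hAB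
  have hsum_l : ∑ A ∈ P, lc A = s := by
    have h := sum_ncard_inter P hdis (L s t)
    rw [hcov, Set.univ_inter, ncard_L] at h
    simpa [lc] using h
  have hsum_r : ∑ A ∈ P, rc A = t := by
    have h := sum_ncard_inter P hdis (R s t)
    rw [hcov, Set.univ_inter, ncard_R] at h
    simpa [rc] using h
  have hsum_lz : ∑ A ∈ P, (lc A : ℤ) = (s : ℤ) := by exact_mod_cast hsum_l
  have hsum_rz : ∑ A ∈ P, (rc A : ℤ) = (t : ℤ) := by exact_mod_cast hsum_r
  have sumlc_le : ∀ Q : Finset (Set (Fin s ⊕ Fin t)), Q ⊆ P →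
      ∑ A ∈ Q, (lc A : ℤ) ≤ (s : ℤ) := by
    intro Q hQ
    rw [← hsum_lz]
    exact Finset.sum_le_sum_of_subset_of_nonneg hQ (fun A _ _ => by positivity)
  -- no part is dominating of size k
  have hnodom : ∀ A ∈ P, ¬ (KDominatingSet (completeBipartiteGraph (Fin s) (Fin t)) k A
      ∧ A.ncard = k) := by
    rintro A hA ⟨hdom, hcard⟩
    rw [kdom_iff] at hdom
    have hsum := lc_add_rc A
    rw [hcard] at hsum
    rcases hdom.1 with hL | hrc
    · have := lc_of_L_subset hL; omega
    · rcases hdom.2 with hR | hlc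
      · have := rc_of_R_subset hR; omega
      · omega
  -- partner function
  have hex : ∀ A, ∃ B, A ∈ P → (B ∈ P ∧ B ≠ A ∧
      KCoalition (completeBipartiteGraph (Fin s) (Fin t)) k A B) := by
    intro A
    by_cases hA : A ∈ P
    · rcases hpart A hA with h | ⟨B, hB, hBA, hco⟩
      · exact absurd h (hnodom A hA)
      · exact ⟨B, fun _ => ⟨hB, hBA, hco⟩⟩
    · exact ⟨∅, fun h => absurd h hA⟩
  choose f hf using hex
  have hfP : ∀ A ∈ P, f A ∈ P := fun A hA => (hf A hA).1
  have hfne : ∀ A ∈ P, f A ≠ A := fun A hA => (hf A hA).2.1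
  have hfdisj : ∀ A ∈ P, Disjoint A (f A) := fun A hA => (hf A hA).2.2.1
  have hndom : ∀ A ∈ P, ¬ KDominatingSet (completeBipartiteGraph (Fin s) (Fin t)) k A :=
    fun A hA => (hf A hA).2.2.2.1
  have hfdom : ∀ A ∈ P, KDominatingSet (completeBipartiteGraph (Fin s) (Fin t)) k (A ∪ f A) :=
    fun A hA => (hf A hA).2.2.2.2.2
  -- non-domination structure
  have nd : ∀ A ∈ P, (¬ L s t ⊆ A ∧ rc A < k) ∨ (¬ R s t ⊆ A ∧ lc A < k) := by
    intro A hA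
    have h := hndom A hA
    rw [kdom_iff] at h
    rcases not_and_or.mp h with h1 | h2
    · left; push_neg at h1; exact ⟨h1.1, h1.2⟩
    · right; push_neg at h2; exact ⟨h2.1, h2.2⟩
  have ndL : ∀ A ∈ P, ¬ L s t ⊆ A := by
    intro A hA hL
    rcases nd A hA with ⟨h, _⟩ | ⟨_, h⟩
    · exact h hL
    · have := lc_of_L_subset hL; omega
  have ndR : ∀ A ∈ P, ¬ R s t ⊆ A := by
    intro A hA hR
    rcases nd A hA with ⟨_, h⟩ | ⟨h, _⟩
    · have := rc_of_R_subset hR; omega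
    · exact h hR
  have nd3 : ∀ A ∈ P, rc A < k ∨ lc A < k := fun A hA => (nd A hA).imp And.right And.right
  -- pair facts
  have pairdom : ∀ A ∈ P, (L s t ⊆ A ∪ f A ∨ k ≤ rc A + rc (f A)) ∧
      (R s t ⊆ A ∪ f A ∨ k ≤ lc A + lc (f A)) := by
    intro A hA
    have h := hfdom A hA
    rw [kdom_iff, rc_union (hfdisj A hA), lc_union (hfdisj A hA)] at h
    exact h
  have hPne : P.Nonempty := by
    have hv : (Sum.inl ⟨0, hs⟩ : Fin s ⊕ Fin t) ∈ ⋃ A ∈ P, A := by rw [hcov]; trivial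
    obtain ⟨A, hA⟩ := Set.mem_iUnion.mp hv
    obtain ⟨hA', _⟩ := Set.mem_iUnion.mp hA
    exact ⟨A, hA'⟩
  by_cases hX : ∃ A ∈ P, R s t ⊆ A ∪ f A
  · -- Case X : a pair covers R
    obtain ⟨A, hA, hRAB⟩ := hX
    set B := f A with hBdef
    have hB : B ∈ P := hfP A hA
    have hBA : B ≠ A := hfne A hA
    have hrczero : ∀ C ∈ P, C ≠ A → C ≠ B → rc C = 0 := by
      intro C hC hCA hCB
      rw [rc_eq_zero]
      have h1 : C ∩ (A ∪ B) = ∅ := by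
        rw [Set.inter_union_distrib_left,
          Set.disjoint_iff_inter_eq_empty.mp (hdisj2 C hC A hA hCA),
          Set.disjoint_iff_inter_eq_empty.mp (hdisj2 C hC B hB hCB), Set.union_empty]
      have h2 : C ∩ R s t ⊆ C ∩ (A ∪ B) := Set.inter_subset_inter_right _ hRAB
      rw [h1] at h2
      exact Set.subset_empty_iff.mp h2
    by_cases hXa : ∃ C ∈ P, C ≠ A ∧ C ≠ B ∧ L s t ⊆ C ∪ f C
    · -- at most 4 parts
      obtain ⟨C, hC, hCA, hCB, hLCE⟩ := hXa
      have hlczero : ∀ D ∈ P, D ≠ C → D ≠ f C → lc D = 0 := by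
        intro D hD hDC hDE
        rw [lc_eq_zero]
        have h1 : D ∩ (C ∪ f C) = ∅ := by
          rw [Set.inter_union_distrib_left,
            Set.disjoint_iff_inter_eq_empty.mp (hdisj2 D hD C hC hDC),
            Set.disjoint_iff_inter_eq_empty.mp (hdisj2 D hD (f C) (hfP C hC) hDE),
            Set.union_empty]
        have h2 : D ∩ L s t ⊆ D ∩ (C ∪ f C) := Set.inter_subset_inter_right _ hLCE
        rw [h1] at h2
        exact Set.subset_empty_iff.mp h2
      have hsub : P ⊆ {A, B, C, f C} := by
        intro D hD
        simp only [Finset.mem_insert, Finset.mem_singleton]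
        by_contra hcon
        push_neg at hcon
        obtain ⟨h1, h2, h3, h4⟩ := hcon
        have e1 : lc D = 0 := hlczero D hD h3 h4
        have e2 : rc D = 0 := hrczero D hD h1 h2
        obtain ⟨v, hv⟩ := hne D hD
        have : v ∈ D ∩ (L s t ∪ R s t) := by
          rw [L_union_R]; exact ⟨hv, trivial⟩
        rw [Set.inter_union_distrib_left, lc_eq_zero.mp e1, rc_eq_zero.mp e2] at this
        simp at this
      have : P.card ≤ 4 := by
        calc P.card ≤ ({A, B, C, f C} : Finset (Set (Fin s ⊕ Fin t))).card :=
              Finset.card_le_card hsub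
        _ ≤ 4 := by
              apply le_trans (Finset.card_insert_le _ _)
              simp only [Nat.succ_le_succ_iff]
              apply le_trans (Finset.card_insert_le _ _)
              simp only [Nat.succ_le_succ_iff]
              apply le_trans (Finset.card_insert_le _ _)
              simp
      omega
    · -- all other parts follow A or B
      push_neg at hXa
      set F := (P.erase A).erase B with hFdef
      have hmemF : ∀ C, C ∈ F ↔ C ∈ P ∧ C ≠ A ∧ C ≠ B := by
        intro C
        simp only [hFdef, Finset.mem_erase]
        tauto
      have hPfromF : P = insert A (insert B F) := by
        rw [hFdef, Finset.insert_erase (Finset.mem_erase.mpr ⟨hBA, hB⟩),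
          Finset.insert_erase hA]
      have hAnotin : A ∉ insert B F := by
        simp only [Finset.mem_insert]
        push_neg
        exact ⟨fun h => hBA h.symm, fun h => ((hmemF A).mp h).2.1 rfl⟩
      have hBnotin : B ∉ F := fun h => ((hmemF B).mp h).2.2 rfl
      have hcardP : P.card = F.card + 2 := by
        rw [hPfromF, Finset.card_insert_of_notMem hAnotin,
          Finset.card_insert_of_notMem hBnotin]
      have key : ∀ C ∈ F, (f C = A ∨ f C = B) ∧ k ≤ lc C + lc (f C) ∧ k ≤ rc (f C) := by
        intro C hCF
        obtain ⟨hC, hCA, hCB⟩ := (hmemF C).mp hCF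
        have hrcC : rc C = 0 := hrczero C hC hCA hCB
        have hrcf : k ≤ rc (f C) := by
          rcases (pairdom C hC).1 with h | h
          · exact absurd h (hXa C hC hCA hCB)
          · omega
        have hfCin : f C = A ∨ f C = B := by
          by_contra hcon
          push_neg at hcon
          have := hrczero (f C) (hfP C hC) hcon.1 hcon.2
          omega
        have hlcf : k ≤ lc C + lc (f C) := by
          rcases (pairdom C hC).2 with h | h
          · exfalso
            apply ndR (f C) (hfP C hC)
            intro v hv
            rcases h hv with hvC | hvf
            · exfalso
              have : v ∈ C ∩ R s t := ⟨hvC, hv⟩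
              rw [rc_eq_zero.mp hrcC] at this
              exact this
            · exact hvf
          · exact h
        exact ⟨hfCin, hlcf, hrcf⟩
      set FA := F.filter (fun C => f C = A) with hFAdef
      set FB := F.filter (fun C => ¬ f C = A) with hFBdef
      have hFsplitc : FA.card + FB.card = F.card :=
        Finset.card_filter_add_card_filter_not _
      have hFsplits : ∑ C ∈ FA, (lc C : ℤ) + ∑ C ∈ FB, (lc C : ℤ) = ∑ C ∈ F, (lc C : ℤ) :=
        Finset.sum_filter_add_sum_filter_not F _ _
      have hFAbound : (FA.card : ℤ) * ((k : ℤ) - lc A) ≤ ∑ C ∈ FA, (lc C : ℤ) := by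
        have h := Finset.card_nsmul_le_sum FA (fun C => (lc C : ℤ)) ((k : ℤ) - lc A)
          (fun C hCF => by
            obtain ⟨hF, hfC⟩ := Finset.mem_filter.mp hCF
            have := (key C hF).2.1
            rw [hfC] at this
            push_cast
            omega)
        simpa [nsmul_eq_mul] using h
      have hFBbound : (FB.card : ℤ) * ((k : ℤ) - lc B) ≤ ∑ C ∈ FB, (lc C : ℤ) := by
        have h := Finset.card_nsmul_le_sum FB (fun C => (lc C : ℤ)) ((k : ℤ) - lc B)
          (fun C hCF => by
            obtain ⟨hF, hfC⟩ := Finset.mem_filter.mp hCF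
            have h1 := (key C hF).2.1
            rw [((key C hF).1).resolve_left hfC] at h1
            push_cast
            omega)
        simpa [nsmul_eq_mul] using h
      have hsplit : ∑ C ∈ P, (lc C : ℤ) = (lc A : ℤ) + ((lc B : ℤ) + ∑ C ∈ F, (lc C : ℤ)) := by
        conv_lhs => rw [hPfromF]
        rw [Finset.sum_insert hAnotin, Finset.sum_insert hBnotin]
      have hgA : 0 < FA.card → k ≤ rc A ∧ lc A < k := by
        intro h
        obtain ⟨C, hC⟩ := Finset.card_pos.mp h
        obtain ⟨hF, hfC⟩ := Finset.mem_filter.mp hC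
        have h1 := (key C hF).2.2
        rw [hfC] at h1
        rcases nd3 A hA with h2 | h2
        · omega
        · exact ⟨h1, h2⟩
      have hgB : 0 < FB.card → k ≤ rc B ∧ lc B < k := by
        intro h
        obtain ⟨C, hC⟩ := Finset.card_pos.mp h
        obtain ⟨hF, hfC⟩ := Finset.mem_filter.mp hC
        have h1 := (key C hF).2.2
        rw [((key C hF).1).resolve_left hfC] at h1
        rcases nd3 B hB with h2 | h2
        · omega
        · exact ⟨h1, h2⟩
      have hsbound : (lc A : ℤ) + lc B +
          ((FA.card : ℤ) * ((k : ℤ) - lc A) + (FB.card : ℤ) * ((k : ℤ) - lc B)) ≤ (s : ℤ) := by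
        rw [← hsum_lz, hsplit, ← hFsplits]
        linarith [hFAbound, hFBbound]
      have hcz : (P.card : ℤ) = (FA.card : ℤ) + FB.card + 2 := by
        have h1 := hFsplitc
        have h2 := hcardP
        push_cast
        omega
      have hstz : (s : ℤ) ≤ t := by exact_mod_cast hst
      have hksz : (k : ℤ) + 1 ≤ s := by exact_mod_cast hks
      have lann : (0 : ℤ) ≤ (lc A : ℤ) := by positivity
      have lbnn : (0 : ℤ) ≤ (lc B : ℤ) := by positivity
      have hgoal : (P.card : ℤ) + k ≤ (t : ℤ) + 3 := by
        rcases Nat.eq_zero_or_pos FA.card with ha | ha <;>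
          rcases Nat.eq_zero_or_pos FB.card with hb | hb
        · rw [hcz, ha, hb]
          push_cast
          linarith
        · have hb1 : (1 : ℤ) ≤ (FB.card : ℤ) := by exact_mod_cast hb
          have hlb : (lc B : ℤ) ≤ (k : ℤ) - 1 := by
            have := (hgB hb).2
            push_cast
            omega
          rw [hcz, ha]
          push_cast
          nlinarith [mul_nonneg (by linarith : (0:ℤ) ≤ (FB.card : ℤ) - 1)
            (by linarith : (0:ℤ) ≤ (k : ℤ) - (lc B : ℤ) - 1), hsbound]
        · have ha1 : (1 : ℤ) ≤ (FA.card : ℤ) := by exact_mod_cast ha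
          have hla : (lc A : ℤ) ≤ (k : ℤ) - 1 := by
            have := (hgA ha).2
            push_cast
            omega
          rw [hcz, hb]
          push_cast
          nlinarith [mul_nonneg (by linarith : (0:ℤ) ≤ (FA.card : ℤ) - 1)
            (by linarith : (0:ℤ) ≤ (k : ℤ) - (lc A : ℤ) - 1), hsbound]
        · have ha1 : (1 : ℤ) ≤ (FA.card : ℤ) := by exact_mod_cast ha
          have hb1 : (1 : ℤ) ≤ (FB.card : ℤ) := by exact_mod_cast hb
          have hla : (lc A : ℤ) ≤ (k : ℤ) - 1 := by
            have := (hgA ha).2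
            push_cast
            omega
          have hlb : (lc B : ℤ) ≤ (k : ℤ) - 1 := by
            have := (hgB hb).2
            push_cast
            omega
          rw [hcz]
          nlinarith [mul_nonneg (by linarith : (0:ℤ) ≤ (FA.card : ℤ) - 1)
            (by linarith : (0:ℤ) ≤ (k : ℤ) - (lc A : ℤ) - 1),
            mul_nonneg (by linarith : (0:ℤ) ≤ (FB.card : ℤ) - 1)
            (by linarith : (0:ℤ) ≤ (k : ℤ) - (lc B : ℤ) - 1), hsbound]
      exact_mod_cast hgoal
  · -- Case Y : no pair covers R
    push_neg at hX
    have pairL : ∀ A ∈ P, k ≤ lc A + lc (f A) := by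
      intro A hA
      rcases (pairdom A hA).2 with h | h
      · exact absurd h (hX A hA)
      · exact h
    by_cases hY1 : ∃ A ∈ P, L s t ⊆ A ∪ f A
    · -- Case Y1 : a pair covers L
      obtain ⟨A, hA, hLAB⟩ := hY1
      set B := f A with hBdef
      have hB : B ∈ P := hfP A hA
      have hBA : B ≠ A := hfne A hA
      have hlczero : ∀ C ∈ P, C ≠ A → C ≠ B → lc C = 0 := by
        intro C hC hCA hCB
        rw [lc_eq_zero]
        have h1 : C ∩ (A ∪ B) = ∅ := by
          rw [Set.inter_union_distrib_left,
            Set.disjoint_iff_inter_eq_empty.mp (hdisj2 C hC A hA hCA),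
            Set.disjoint_iff_inter_eq_empty.mp (hdisj2 C hC B hB hCB), Set.union_empty]
        have h2 : C ∩ L s t ⊆ C ∩ (A ∪ B) := Set.inter_subset_inter_right _ hLAB
        rw [h1] at h2
        exact Set.subset_empty_iff.mp h2
      set F := (P.erase A).erase B with hFdef
      have hmemF : ∀ C, C ∈ F ↔ C ∈ P ∧ C ≠ A ∧ C ≠ B := by
        intro C
        simp only [hFdef, Finset.mem_erase]
        tauto
      have hPfromF : P = insert A (insert B F) := by
        rw [hFdef, Finset.insert_erase (Finset.mem_erase.mpr ⟨hBA, hB⟩),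
          Finset.insert_erase hA]
      have hAnotin : A ∉ insert B F := by
        simp only [Finset.mem_insert]
        push_neg
        exact ⟨fun h => hBA h.symm, fun h => ((hmemF A).mp h).2.1 rfl⟩
      have hBnotin : B ∉ F := fun h => ((hmemF B).mp h).2.2 rfl
      have hcardP : P.card = F.card + 2 := by
        rw [hPfromF, Finset.card_insert_of_notMem hAnotin,
          Finset.card_insert_of_notMem hBnotin]
      have key : ∀ C ∈ F, (f C = A ∨ f C = B) ∧ k ≤ rc C + rc (f C) ∧ k ≤ lc (f C) := by
        intro C hCF
        obtain ⟨hC, hCA, hCB⟩ := (hmemF C).mp hCF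
        have hlcC : lc C = 0 := hlczero C hC hCA hCB
        have hlcf : k ≤ lc (f C) := by
          have := pairL C hC
          omega
        have hfCin : f C = A ∨ f C = B := by
          by_contra hcon
          push_neg at hcon
          have := hlczero (f C) (hfP C hC) hcon.1 hcon.2
          omega
        have hrcf : k ≤ rc C + rc (f C) := by
          rcases (pairdom C hC).1 with h | h
          · exfalso
            apply ndL (f C) (hfP C hC)
            intro v hv
            rcases h hv with hvC | hvf
            · exfalso
              have : v ∈ C ∩ L s t := ⟨hvC, hv⟩
              rw [lc_eq_zero.mp hlcC] at this
              exact this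
            · exact hvf
          · exact h
        exact ⟨hfCin, hrcf, hlcf⟩
      set FA := F.filter (fun C => f C = A) with hFAdef
      set FB := F.filter (fun C => ¬ f C = A) with hFBdef
      have hFsplitc : FA.card + FB.card = F.card :=
        Finset.card_filter_add_card_filter_not _
      have hFsplits : ∑ C ∈ FA, (rc C : ℤ) + ∑ C ∈ FB, (rc C : ℤ) = ∑ C ∈ F, (rc C : ℤ) :=
        Finset.sum_filter_add_sum_filter_not F _ _
      have hFAbound : (FA.card : ℤ) * ((k : ℤ) - rc A) ≤ ∑ C ∈ FA, (rc C : ℤ) := by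
        have h := Finset.card_nsmul_le_sum FA (fun C => (rc C : ℤ)) ((k : ℤ) - rc A)
          (fun C hCF => by
            obtain ⟨hF, hfC⟩ := Finset.mem_filter.mp hCF
            have hthis := (key C hF).2.1
            rw [hfC] at hthis
            push_cast
            omega)
        simpa [nsmul_eq_mul] using h
      have hFBbound : (FB.card : ℤ) * ((k : ℤ) - rc B) ≤ ∑ C ∈ FB, (rc C : ℤ) := by
        have h := Finset.card_nsmul_le_sum FB (fun C => (rc C : ℤ)) ((k : ℤ) - rc B)
          (fun C hCF => by
            obtain ⟨hF, hfC⟩ := Finset.mem_filter.mp hCF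
            have h1 := (key C hF).2.1
            rw [((key C hF).1).resolve_left hfC] at h1
            push_cast
            omega)
        simpa [nsmul_eq_mul] using h
      have hsplit : ∑ C ∈ P, (rc C : ℤ) = (rc A : ℤ) + ((rc B : ℤ) + ∑ C ∈ F, (rc C : ℤ)) := by
        conv_lhs => rw [hPfromF]
        rw [Finset.sum_insert hAnotin, Finset.sum_insert hBnotin]
      have hgA : 0 < FA.card → rc A < k := by
        intro h
        obtain ⟨C, hC⟩ := Finset.card_pos.mp h
        obtain ⟨hF, hfC⟩ := Finset.mem_filter.mp hC
        have h1 := (key C hF).2.2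
        rw [hfC] at h1
        rcases nd3 A hA with h2 | h2
        · exact h2
        · omega
      have hgB : 0 < FB.card → rc B < k := by
        intro h
        obtain ⟨C, hC⟩ := Finset.card_pos.mp h
        obtain ⟨hF, hfC⟩ := Finset.mem_filter.mp hC
        have h1 := (key C hF).2.2
        rw [((key C hF).1).resolve_left hfC] at h1
        rcases nd3 B hB with h2 | h2
        · exact h2
        · omega
      have htbound : (rc A : ℤ) + rc B +
          ((FA.card : ℤ) * ((k : ℤ) - rc A) + (FB.card : ℤ) * ((k : ℤ) - rc B)) ≤ (t : ℤ) := by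
        rw [← hsum_rz, hsplit, ← hFsplits]
        linarith [hFAbound, hFBbound]
      have hcz : (P.card : ℤ) = (FA.card : ℤ) + FB.card + 2 := by
        have h1 := hFsplitc
        have h2 := hcardP
        push_cast
        omega
      have hstz : (s : ℤ) ≤ t := by exact_mod_cast hst
      have hksz : (k : ℤ) + 1 ≤ s := by exact_mod_cast hks
      have lann : (0 : ℤ) ≤ (rc A : ℤ) := by positivity
      have lbnn : (0 : ℤ) ≤ (rc B : ℤ) := by positivity
      have hgoal : (P.card : ℤ) + k ≤ (t : ℤ) + 3 := by
        rcases Nat.eq_zero_or_pos FA.card with ha | ha <;>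
          rcases Nat.eq_zero_or_pos FB.card with hb | hb
        · rw [hcz, ha, hb]
          push_cast
          linarith
        · have hb1 : (1 : ℤ) ≤ (FB.card : ℤ) := by exact_mod_cast hb
          have hlb : (rc B : ℤ) ≤ (k : ℤ) - 1 := by
            have := hgB hb
            push_cast
            omega
          rw [hcz, ha]
          push_cast
          nlinarith [mul_nonneg (by linarith : (0:ℤ) ≤ (FB.card : ℤ) - 1)
            (by linarith : (0:ℤ) ≤ (k : ℤ) - (rc B : ℤ) - 1), htbound]
        · have ha1 : (1 : ℤ) ≤ (FA.card : ℤ) := by exact_mod_cast ha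
          have hla : (rc A : ℤ) ≤ (k : ℤ) - 1 := by
            have := hgA ha
            push_cast
            omega
          rw [hcz, hb]
          push_cast
          nlinarith [mul_nonneg (by linarith : (0:ℤ) ≤ (FA.card : ℤ) - 1)
            (by linarith : (0:ℤ) ≤ (k : ℤ) - (rc A : ℤ) - 1), htbound]
        · have ha1 : (1 : ℤ) ≤ (FA.card : ℤ) := by exact_mod_cast ha
          have hb1 : (1 : ℤ) ≤ (FB.card : ℤ) := by exact_mod_cast hb
          have hla : (rc A : ℤ) ≤ (k : ℤ) - 1 := by
            have := hgA ha
            push_cast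
            omega
          have hlb : (rc B : ℤ) ≤ (k : ℤ) - 1 := by
            have := hgB hb
            push_cast
            omega
          rw [hcz]
          nlinarith [mul_nonneg (by linarith : (0:ℤ) ≤ (FA.card : ℤ) - 1)
            (by linarith : (0:ℤ) ≤ (k : ℤ) - (rc A : ℤ) - 1),
            mul_nonneg (by linarith : (0:ℤ) ≤ (FB.card : ℤ) - 1)
            (by linarith : (0:ℤ) ≤ (k : ℤ) - (rc B : ℤ) - 1), htbound]
      exact_mod_cast hgoal
    · -- Case Y2 : no pair covers L or R
      push_neg at hY1
      have pairR : ∀ A ∈ P, k ≤ rc A + rc (f A) := by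
        intro A hA
        rcases (pairdom A hA).1 with h | h
        · exact absurd h (hY1 A hA)
        · exact h
      by_cases hI0 : ∀ A ∈ P, 1 ≤ lc A
      · -- every part meets the left side
        obtain ⟨A0, hA0⟩ := hPne
        have hB0 : f A0 ∈ P := hfP A0 hA0
        have hB0ne : f A0 ≠ A0 := hfne A0 hA0
        have hsub : ({A0, f A0} : Finset (Set (Fin s ⊕ Fin t))) ⊆ P := by
          intro C hC
          rcases Finset.mem_insert.mp hC with rfl | hC
          · exact hA0
          · rw [Finset.mem_singleton.mp hC]
            exact hB0
        have hsum2 : ∑ C ∈ ({A0, f A0} : Finset (Set (Fin s ⊕ Fin t))), ((lc C : ℤ) - 1) ≤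
            ∑ C ∈ P, ((lc C : ℤ) - 1) := by
          apply Finset.sum_le_sum_of_subset_of_nonneg hsub
          intro C hC _
          have := hI0 C hC
          push_cast
          omega
        have hval : ∑ C ∈ ({A0, f A0} : Finset (Set (Fin s ⊕ Fin t))), ((lc C : ℤ) - 1) =
            ((lc A0 : ℤ) - 1) + ((lc (f A0) : ℤ) - 1) :=
          Finset.sum_pair (Ne.symm hB0ne)
        have htot : ∑ C ∈ P, ((lc C : ℤ) - 1) = (s : ℤ) - P.card := by
          rw [Finset.sum_sub_distrib, hsum_lz]
          simp
        have hpl := pairL A0 hA0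
        have hgoal : (P.card : ℤ) + k ≤ (t : ℤ) + 3 := by
          have hstz : (s : ℤ) ≤ t := by exact_mod_cast hst
          have hplz : (k : ℤ) ≤ (lc A0 : ℤ) + (lc (f A0) : ℤ) := by exact_mod_cast hpl
          rw [hval, htot] at hsum2
          linarith
        exact_mod_cast hgoal
      · -- there is a part missing the left side
        push_neg at hI0
        obtain ⟨As, hAs, hlcAs'⟩ := hI0
        have hlcAs : lc As = 0 := by omega
        have hBs : f As ∈ P := hfP As hAs
        have hBsne : f As ≠ As := hfne As hAs
        have hlcBs : k ≤ lc (f As) := by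
          have := pairL As hAs
          omega
        have hrcBs : rc (f As) < k := by
          rcases nd3 (f As) hBs with h | h
          · exact h
          · omega
        have hrcAs : k ≤ rc As + rc (f As) := pairR As hAs
        have hrcAs1 : 1 ≤ rc As := by omega
        set F := P.filter (fun C => rc C = 0 ∧ C ≠ f As) with hFdef
        have hmemF : ∀ C, C ∈ F ↔ C ∈ P ∧ rc C = 0 ∧ C ≠ f As := by
          intro C
          simp [hFdef]
        have hkeyF : ∀ C ∈ F, k ≤ rc (f C) ∧ lc (f C) < k ∧ k ≤ lc C + lc (f C) := by
          intro C hC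
          obtain ⟨hCP, hrcC, hCBs⟩ := (hmemF C).mp hC
          have h1 : k ≤ rc (f C) := by
            have := pairR C hCP
            omega
          have h2 : lc (f C) < k := by
            rcases nd3 (f C) (hfP C hCP) with h | h
            · omega
            · exact h
          exact ⟨h1, h2, pairL C hCP⟩
        set I := F.image f with hIdef
        have hIP : I ⊆ P := by
          intro D hD
          obtain ⟨C, hC, rfl⟩ := Finset.mem_image.mp hD
          exact hfP C (((hmemF C).mp hC).1)
        have hrcI : ∀ D ∈ I, k ≤ rc D := by
          intro D hD
          obtain ⟨C, hC, rfl⟩ := Finset.mem_image.mp hD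
          exact (hkeyF C hC).1
        have hBsI : f As ∉ I := fun h => by have := hrcI _ h; omega
        have hBsF : f As ∉ F := by
          intro h
          exact ((hmemF _).mp h).2.2 rfl
        have hAsF : As ∉ F := by
          intro h
          have := ((hmemF _).mp h).2.1
          omega
        have hFI : Disjoint F I := by
          rw [Finset.disjoint_left]
          intro C hCF hCI
          have h1 := hrcI C hCI
          have h2 := ((hmemF C).mp hCF).2.1
          omega
        have hgr : (F.card : ℤ) + (I.card : ℤ) * ((k : ℤ) - 1) ≤
            (∑ C ∈ F, (lc C : ℤ)) + ∑ D ∈ I, (lc D : ℤ) := by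
          have := grouping F f (fun S => (lc S : ℤ)) (k : ℤ)
            (fun C hC => by
              have := (hkeyF C hC).2.2
              push_cast
              omega)
            (fun C hC => by
              have := (hkeyF C hC).2.1
              push_cast
              omega)
          exact_mod_cast this
        have hBsFI : f As ∉ F ∪ I := by
          rw [Finset.mem_union]
          push_neg
          exact ⟨hBsF, hBsI⟩
        have hsumFI : (lc (f As) : ℤ) + ((∑ C ∈ F, (lc C : ℤ)) + ∑ D ∈ I, (lc D : ℤ)) ≤ (s : ℤ) := by
          have hsub : insert (f As) (F ∪ I) ⊆ P := by
            intro C hC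
            rcases Finset.mem_insert.mp hC with rfl | hC
            · exact hBs
            · rcases Finset.mem_union.mp hC with h | h
              · exact ((hmemF C).mp h).1
              · exact hIP h
          have := sumlc_le _ hsub
          rwa [Finset.sum_insert hBsFI, Finset.sum_union hFI] at this
        have hFIs : (F.card : ℤ) + (I.card : ℤ) * ((k : ℤ) - 1) ≤ (s : ℤ) - k := by
          have hlcBsz : (k : ℤ) ≤ (lc (f As) : ℤ) := by exact_mod_cast hlcBs
          linarith
        have hFcard : (F.card : ℤ) ≤ (I.card : ℤ) * ((k : ℤ) - 1) + 1 := by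
          rcases Nat.eq_zero_or_pos I.card with h0 | h0
          · have hF0 : F = ∅ := by
              by_contra hFne
              obtain ⟨C, hC⟩ := Finset.nonempty_iff_ne_empty.mpr hFne
              have : f C ∈ I := Finset.mem_image_of_mem f hC
              rw [Finset.card_eq_zero.mp h0] at this
              exact absurd this (Finset.notMem_empty _)
            have hI0' : I = ∅ := Finset.card_eq_zero.mp h0
            rw [hF0, hI0']
            simp
          · have h1 : (1 : ℤ) ≤ (I.card : ℤ) := by exact_mod_cast h0
            have hskz : (s : ℤ) + 2 ≤ 3 * k := by exact_mod_cast hsk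
            have hkz : (2 : ℤ) ≤ k := by exact_mod_cast hk
            nlinarith [hFIs]
        have htot_r : ∑ C ∈ P, ((rc C : ℤ) - 1) = (t : ℤ) - P.card := by
          rw [Finset.sum_sub_distrib, hsum_rz]
          simp
        by_cases hAI : As ∈ I
        · -- the partner of some pure-left part is As itself
          obtain ⟨C0, hC0F, hfC0⟩ := Finset.mem_image.mp hAI
          have hC0P : C0 ∈ P := ((hmemF C0).mp hC0F).1
          have hrcC0 : rc C0 = 0 := ((hmemF C0).mp hC0F).2.1
          have hrcAstar : k ≤ rc As := by
            have := (hkeyF C0 hC0F).1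
            rwa [hfC0] at this
          have hlcC0 : k ≤ lc C0 := by
            have := pairL C0 hC0P
            rw [hfC0, hlcAs] at this
            omega
          have hskz : (s : ℤ) + 2 ≤ 3 * k := by exact_mod_cast hsk
          have hFsingle : ∀ C ∈ F, C = C0 := by
            intro C hCF
            by_contra hCC0
            obtain ⟨hCP, hrcC, hCBs⟩ := (hmemF C).mp hCF
            have hC0Bs : C0 ≠ f As := ((hmemF C0).mp hC0F).2.2
            by_cases hfC : f C = As
            · have hlcC : k ≤ lc C := by
                have := pairL C hCP
                rw [hfC, hlcAs] at this
                omega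
              have hsub3 : ({f As, C0, C} : Finset (Set (Fin s ⊕ Fin t))) ⊆ P := by
                intro D hD
                rcases Finset.mem_insert.mp hD with rfl | hD
                · exact hBs
                rcases Finset.mem_insert.mp hD with rfl | hD
                · exact hC0P
                · rw [Finset.mem_singleton.mp hD]
                  exact hCP
              have hs3 := sumlc_le _ hsub3
              rw [Finset.sum_insert (by
                    simp only [Finset.mem_insert, Finset.mem_singleton]
                    push_neg
                    exact ⟨Ne.symm hC0Bs, Ne.symm hCBs⟩),
                  Finset.sum_pair (fun h => hCC0 h.symm)] at hs3
              have h1 : (k : ℤ) ≤ (lc (f As) : ℤ) := by exact_mod_cast hlcBs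
              have h2 : (k : ℤ) ≤ (lc C0 : ℤ) := by exact_mod_cast hlcC0
              have h3 : (k : ℤ) ≤ (lc C : ℤ) := by exact_mod_cast hlcC
              linarith
            · have hDI : f C ∈ I := by
                rw [hIdef]
                exact Finset.mem_image_of_mem f hCF
              have hrcD : k ≤ rc (f C) := (hkeyF C hCF).1
              have hlcCD : k ≤ lc C + lc (f C) := pairL C hCP
              have hDBs : f C ≠ f As := by
                intro h
                rw [h] at hrcD
                omega
              have hDC0 : f C ≠ C0 := by
                intro h
                rw [h] at hrcD
                omega
              have hDC : f C ≠ C := by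
                intro h
                rw [h] at hrcD
                omega
              have hsub4 : ({f As, C0, C, f C} : Finset (Set (Fin s ⊕ Fin t))) ⊆ P := by
                intro D hD
                rcases Finset.mem_insert.mp hD with rfl | hD
                · exact hBs
                rcases Finset.mem_insert.mp hD with rfl | hD
                · exact hC0P
                rcases Finset.mem_insert.mp hD with rfl | hD
                · exact hCP
                · rw [Finset.mem_singleton.mp hD]
                  exact hfP C hCP
              have hs4 := sumlc_le _ hsub4
              rw [Finset.sum_insert (by
                    simp only [Finset.mem_insert, Finset.mem_singleton]
                    push_neg
                    exact ⟨Ne.symm hC0Bs, Ne.symm hCBs, Ne.symm hDBs⟩),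
                  Finset.sum_insert (by
                    simp only [Finset.mem_insert, Finset.mem_singleton]
                    push_neg
                    exact ⟨fun h => hCC0 h.symm, Ne.symm hDC0⟩),
                  Finset.sum_pair (Ne.symm hDC)] at hs4
              have h1 : (k : ℤ) ≤ (lc (f As) : ℤ) := by exact_mod_cast hlcBs
              have h2 : (k : ℤ) ≤ (lc C0 : ℤ) := by exact_mod_cast hlcC0
              have h3 : (k : ℤ) ≤ (lc C : ℤ) + (lc (f C) : ℤ) := by exact_mod_cast hlcCD
              linarith
          -- now bound the right side
          have hS3sub : ({As, f As, C0} : Finset (Set (Fin s ⊕ Fin t))) ⊆ P := by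
            intro D hD
            rcases Finset.mem_insert.mp hD with rfl | hD
            · exact hAs
            rcases Finset.mem_insert.mp hD with rfl | hD
            · exact hBs
            · rw [Finset.mem_singleton.mp hD]
              exact hC0P
          have hAsC0 : As ≠ C0 := by
            intro h
            rw [← h] at hrcC0
            omega
          have hBsC0 : f As ≠ C0 := Ne.symm (((hmemF C0).mp hC0F).2.2)
          have hsum3 : ∑ C ∈ ({As, f As, C0} : Finset (Set (Fin s ⊕ Fin t))), ((rc C : ℤ) - 1) ≤
              ∑ C ∈ P, ((rc C : ℤ) - 1) := by
            apply Finset.sum_le_sum_of_subset_of_nonneg hS3sub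
            intro D hD hDS
            have hrcD : 1 ≤ rc D := by
              by_contra hcon
              push_neg at hcon
              have hrcD0 : rc D = 0 := by omega
              have hDBs : D ≠ f As := by
                intro h
                rw [h] at hDS
                exact hDS (by simp)
              have : D ∈ F := (hmemF D).mpr ⟨hD, hrcD0, hDBs⟩
              have := hFsingle D this
              rw [this] at hDS
              exact hDS (by simp)
            push_cast
            omega
          rw [Finset.sum_insert (by
                simp only [Finset.mem_insert, Finset.mem_singleton]
                push_neg
                exact ⟨Ne.symm hBsne, hAsC0⟩),
              Finset.sum_pair hBsC0, htot_r] at hsum3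
          have h1 : (k : ℤ) ≤ (rc As : ℤ) := by exact_mod_cast hrcAstar
          have h2 : (0 : ℤ) ≤ (rc (f As) : ℤ) := by positivity
          have h3 : (rc C0 : ℤ) = 0 := by exact_mod_cast hrcC0
          have hgoal : (P.card : ℤ) + k ≤ (t : ℤ) + 3 := by linarith
          exact_mod_cast hgoal
        · -- As is not a partner of any pure-left part
          have hAsFI : As ∉ insert (f As) (F ∪ I) := by
            simp only [Finset.mem_insert, Finset.mem_union]
            push_neg
            exact ⟨fun h => hBsne h.symm, hAsF, hAI⟩
          have hS0sub : insert As (insert (f As) (F ∪ I)) ⊆ P := by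
            intro C hC
            rcases Finset.mem_insert.mp hC with rfl | hC
            · exact hAs
            rcases Finset.mem_insert.mp hC with rfl | hC
            · exact hBs
            · rcases Finset.mem_union.mp hC with h | h
              · exact ((hmemF C).mp h).1
              · exact hIP h
          have hsumS0 : ∑ C ∈ insert As (insert (f As) (F ∪ I)), ((rc C : ℤ) - 1) ≤
              ∑ C ∈ P, ((rc C : ℤ) - 1) := by
            apply Finset.sum_le_sum_of_subset_of_nonneg hS0sub
            intro D hD hDS
            have hrcD : 1 ≤ rc D := by
              by_contra hcon
              push_neg at hcon
              have hrcD0 : rc D = 0 := by omega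
              have hDBs : D ≠ f As := by
                intro h
                rw [h] at hDS
                exact hDS (by simp)
              have : D ∈ F := (hmemF D).mpr ⟨hD, hrcD0, hDBs⟩
              exact hDS (by simp [this])
            push_cast
            omega
          have hsumF : ∑ C ∈ F, ((rc C : ℤ) - 1) = -(F.card : ℤ) := by
            have : ∑ C ∈ F, ((rc C : ℤ) - 1) = ∑ C ∈ F, (-1 : ℤ) := by
              apply Finset.sum_congr rfl
              intro C hC
              rw [((hmemF C).mp hC).2.1]
              norm_num
            rw [this, Finset.sum_const]
            simp
          have hsumI : (I.card : ℤ) * ((k : ℤ) - 1) ≤ ∑ D ∈ I, ((rc D : ℤ) - 1) := by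
            have h := Finset.card_nsmul_le_sum I (fun D => (rc D : ℤ) - 1) ((k : ℤ) - 1)
              (fun D hD => by
                have := hrcI D hD
                push_cast
                omega)
            simpa [nsmul_eq_mul] using h
          rw [Finset.sum_insert hAsFI, Finset.sum_insert hBsFI, Finset.sum_union hFI,
            hsumF, htot_r] at hsumS0
          have h1 : (k : ℤ) ≤ (rc As : ℤ) + (rc (f As) : ℤ) := by exact_mod_cast hrcAs
          have hgoal : (P.card : ℤ) + k ≤ (t : ℤ) + 3 := by linarith [hsumI, hFcard]
          exact_mod_cast hgoal

lemma construction (s t k : ℕ) (hs : 0 < s) (hst : s ≤ t) (hk : 2 ≤ k) (hks : k + 1 ≤ s) :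
    ∃ P : Finset (Set (Fin s ⊕ Fin t)),
      KCoalitionPartition (completeBipartiteGraph (Fin s) (Fin t)) k P ∧
      P.card = t - k + 3 := by
  classical
  have hkt : k < t := by omega
  have hks' : k < s := by omega
  have hk1t : k - 1 ≤ t := by omega
  have hkss : k ≤ s := by omega
  set P1 : Set (Fin s ⊕ Fin t) :=
    {v | Sum.elim (fun a : Fin s => (a : ℕ) < k) (fun b : Fin t => (b : ℕ) < k - 1) v} with hP1
  set P2 : Set (Fin s ⊕ Fin t) :=
    {v | Sum.elim (fun a : Fin s => k ≤ (a : ℕ)) (fun _ : Fin t => False) v} with hP2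
  set sing : Fin t → Set (Fin s ⊕ Fin t) := fun b => {Sum.inr b} with hsing
  set Psing : Finset (Set (Fin s ⊕ Fin t)) :=
    (Finset.univ.filter (fun b : Fin t => k - 1 ≤ (b : ℕ))).image sing with hPsing
  set P : Finset (Set (Fin s ⊕ Fin t)) := insert P1 (insert P2 Psing) with hPdef
  -- count lemmas
  have hlcP1 : lc P1 = k := by
    have h1 : P1 ∩ L s t = Sum.inl '' {a : Fin s | (a : ℕ) < k} := by
      ext v
      cases v with
      | inl a => simp [hP1, L]
      | inr b => simp [hP1, L]
    rw [lc, h1, Set.ncard_image_of_injective _ Sum.inl_injective, ncard_setOf_lt k hkss]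
  have hrcP1 : rc P1 = k - 1 := by
    have h1 : P1 ∩ R s t = Sum.inr '' {b : Fin t | (b : ℕ) < k - 1} := by
      ext v
      cases v with
      | inl a => simp [hP1, R]
      | inr b => simp [hP1, R]
    rw [rc, h1, Set.ncard_image_of_injective _ Sum.inr_injective, ncard_setOf_lt (k-1) hk1t]
  have hlcP2 : lc P2 = s - k := by
    have h1 : P2 ∩ L s t = Sum.inl '' {a : Fin s | k ≤ (a : ℕ)} := by
      ext v
      cases v with
      | inl a => simp [hP2, L]
      | inr b => simp [hP2, L]
    rw [lc, h1, Set.ncard_image_of_injective _ Sum.inl_injective, ncard_setOf_le k hkss]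
  have hrcP2 : rc P2 = 0 := by
    rw [rc_eq_zero]
    ext v
    cases v with
    | inl a => simp [hP2, R]
    | inr b => simp [hP2, R]
  have hlcsing : ∀ b : Fin t, lc (sing b) = 0 := by
    intro b
    rw [lc_eq_zero]
    ext v
    cases v with
    | inl a => simp [hsing, L]
    | inr b' => simp [hsing, L]
  have hrcsing : ∀ b : Fin t, rc (sing b) = 1 := by
    intro b
    have h1 : sing b ∩ R s t = {Sum.inr b} := by
      ext v
      cases v with
      | inl a => simp [hsing, R]
      | inr b' => simp [hsing, R]
    rw [rc, h1, Set.ncard_singleton]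
  -- non-domination
  have hndP1 : ¬ KDominatingSet (completeBipartiteGraph (Fin s) (Fin t)) k P1 := by
    intro h
    rcases (kdom_iff.mp h).1 with hL | hrc
    · have : (Sum.inl ⟨k, hks'⟩ : Fin s ⊕ Fin t) ∈ P1 := hL ⟨⟨k, hks'⟩, rfl⟩
      simp [hP1] at this
    · rw [hrcP1] at hrc
      omega
  have hndP2 : ¬ KDominatingSet (completeBipartiteGraph (Fin s) (Fin t)) k P2 := by
    intro h
    rcases (kdom_iff.mp h).1 with hL | hrc
    · have : (Sum.inl ⟨0, hs⟩ : Fin s ⊕ Fin t) ∈ P2 := hL ⟨⟨0, hs⟩, rfl⟩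
      simp [hP2] at this
      omega
    · rw [hrcP2] at hrc
      omega
  have hndsing : ∀ b : Fin t, ¬ KDominatingSet (completeBipartiteGraph (Fin s) (Fin t)) k (sing b) := by
    intro b h
    rcases (kdom_iff.mp h).2 with hR | hlc
    · -- R ⊆ {inr b} is impossible since t ≥ 2
      have hb0 : (0 : ℕ) < t := by omega
      have hb1 : (1 : ℕ) < t := by omega
      have h0 : (Sum.inr ⟨0, hb0⟩ : Fin s ⊕ Fin t) ∈ sing b := hR ⟨⟨0, hb0⟩, rfl⟩
      have h1 : (Sum.inr ⟨1, hb1⟩ : Fin s ⊕ Fin t) ∈ sing b := hR ⟨⟨1, hb1⟩, rfl⟩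
      simp only [hsing, Set.mem_singleton_iff, Sum.inr.injEq] at h0 h1
      rw [← h0] at h1
      simp [Fin.ext_iff] at h1
    · rw [hlcsing b] at hlc
      omega
  -- disjointness
  have hd12 : Disjoint P1 P2 := by
    rw [Set.disjoint_left]
    intro v hv1 hv2
    cases v with
    | inl a =>
      simp [hP1] at hv1
      simp [hP2] at hv2
      omega
    | inr b =>
      simp [hP2] at hv2
  have hd1s : ∀ b : Fin t, k - 1 ≤ (b : ℕ) → Disjoint P1 (sing b) := by
    intro b hb
    rw [Set.disjoint_left]
    intro v hv1 hv2
    simp only [hsing, Set.mem_singleton_iff] at hv2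
    subst hv2
    simp [hP1] at hv1
    omega
  have hd2s : ∀ b : Fin t, Disjoint P2 (sing b) := by
    intro b
    rw [Set.disjoint_left]
    intro v hv1 hv2
    simp only [hsing, Set.mem_singleton_iff] at hv2
    subst hv2
    simp [hP2] at hv1
  -- domination of unions
  have hdom12 : KDominatingSet (completeBipartiteGraph (Fin s) (Fin t)) k (P1 ∪ P2) := by
    rw [kdom_iff]
    have hLsub : L s t ⊆ P1 ∪ P2 := by
      rintro v ⟨a, rfl⟩
      by_cases h : (a : ℕ) < k
      · left; simp [hP1, h]
      · right; simp [hP2]; omega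
    constructor
    · exact Or.inl hLsub
    · right
      rw [lc_of_L_subset hLsub]
      omega
  have hdoms1 : ∀ b : Fin t, k - 1 ≤ (b : ℕ) →
      KDominatingSet (completeBipartiteGraph (Fin s) (Fin t)) k (sing b ∪ P1) := by
    intro b hb
    rw [kdom_iff]
    have hdisj : Disjoint (sing b) P1 := (hd1s b hb).symm
    constructor
    · right
      rw [rc_union hdisj, hrcsing, hrcP1]
      omega
    · right
      rw [lc_union hdisj, hlcsing, hlcP1]
      omega
  -- distinctness of parts
  have hP1P2 : P1 ≠ P2 := by
    intro h
    have h0 : (Sum.inl ⟨0, hs⟩ : Fin s ⊕ Fin t) ∈ P1 := by simp [hP1]; omega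
    rw [h] at h0
    simp [hP2] at h0
    omega
  have hP1sing : ∀ b : Fin t, k - 1 ≤ (b : ℕ) → P1 ≠ sing b := by
    intro b hb h
    have h0 : (Sum.inl ⟨0, hs⟩ : Fin s ⊕ Fin t) ∈ P1 := by simp [hP1]; omega
    rw [h] at h0
    simp [hsing] at h0
  have hP2sing : ∀ b : Fin t, P2 ≠ sing b := by
    intro b h
    have h0 : (Sum.inl ⟨k, hks'⟩ : Fin s ⊕ Fin t) ∈ P2 := by simp [hP2]
    rw [h] at h0
    simp [hsing] at h0
  have hsinginj : Function.Injective sing := by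
    intro b b' h
    have h2 : (Sum.inr b : Fin s ⊕ Fin t) ∈ sing b' := by rw [← h]; simp [hsing]
    simpa [hsing] using h2
  have hmemPsing : ∀ A, A ∈ Psing ↔ ∃ b : Fin t, k - 1 ≤ (b : ℕ) ∧ A = sing b := by
    intro A
    simp only [hPsing, Finset.mem_image, Finset.mem_filter, Finset.mem_univ, true_and]
    constructor
    · rintro ⟨b, hb, rfl⟩
      exact ⟨b, hb, rfl⟩
    · rintro ⟨b, hb, rfl⟩
      exact ⟨b, hb, rfl⟩
  have hP1Psing : P1 ∉ Psing := by
    intro h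
    obtain ⟨b, hb, he⟩ := (hmemPsing P1).mp h
    exact hP1sing b hb he
  have hP2Psing : P2 ∉ Psing := by
    intro h
    obtain ⟨b, _, he⟩ := (hmemPsing P2).mp h
    exact hP2sing b he
  -- cardinality
  have hcardPsing : Psing.card = t - (k - 1) := by
    rw [hPsing, Finset.card_image_of_injective _ hsinginj, filter_le_card t (k-1) hk1t]
  have hcardP : P.card = t - k + 3 := by
    rw [hPdef, Finset.card_insert_of_notMem (by
        simp only [Finset.mem_insert]
        push_neg
        exact ⟨hP1P2, hP1Psing⟩),
      Finset.card_insert_of_notMem hP2Psing, hcardPsing]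
    omega
  refine ⟨P, ⟨?_, ?_, ?_, ?_⟩, hcardP⟩
  · -- nonempty
    intro A hA
    rw [hPdef] at hA
    rcases Finset.mem_insert.mp hA with rfl | hA
    · exact ⟨Sum.inl ⟨0, hs⟩, by simp [hP1]; omega⟩
    rcases Finset.mem_insert.mp hA with rfl | hA
    · exact ⟨Sum.inl ⟨k, hks'⟩, by simp [hP2]⟩
    · obtain ⟨b, hb, rfl⟩ := (hmemPsing A).mp hA
      exact ⟨Sum.inr b, by simp [hsing]⟩
  · -- pairwise disjoint
    intro x hx y hy hxy
    simp only [Finset.coe_insert, Set.mem_insert_iff, Finset.mem_coe, hPdef] at hx hy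
    have hget : ∀ z, z = P1 ∨ z = P2 ∨ z ∈ Psing → z = P1 ∨ z = P2 ∨
        ∃ b : Fin t, k - 1 ≤ (b : ℕ) ∧ z = sing b := by
      rintro z (rfl | rfl | hz)
      · exact Or.inl rfl
      · exact Or.inr (Or.inl rfl)
      · exact Or.inr (Or.inr ((hmemPsing z).mp hz))
    rcases hget x hx with rfl | rfl | ⟨b, hb, rfl⟩ <;>
      rcases hget y hy with rfl | rfl | ⟨b', hb', rfl⟩
    · exact absurd rfl hxy
    · exact hd12
    · exact hd1s b' hb'
    · exact hd12.symm
    · exact absurd rfl hxy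
    · exact hd2s b'
    · exact (hd1s b hb).symm
    · exact (hd2s b).symm
    · show Disjoint (sing b) (sing b')
      rw [Set.disjoint_left]
      intro v hv1 hv2
      simp only [hsing, Set.mem_singleton_iff] at hv1 hv2
      rw [hv1] at hv2
      obtain rfl : b = b' := by simpa using hv2
      exact hxy rfl
  · -- cover
    apply Set.eq_univ_of_forall
    intro v
    rw [hPdef]
    simp only [Finset.mem_insert, Set.mem_iUnion]
    cases v with
    | inl a =>
      by_cases h : (a : ℕ) < k
      · exact ⟨P1, ⟨Or.inl rfl, by simp [hP1, h]⟩⟩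
      · exact ⟨P2, ⟨Or.inr (Or.inl rfl), by simp [hP2]; omega⟩⟩
    | inr b =>
      by_cases h : (b : ℕ) < k - 1
      · exact ⟨P1, ⟨Or.inl rfl, by simp [hP1, h]⟩⟩
      · refine ⟨sing b, ⟨Or.inr (Or.inr ((hmemPsing (sing b)).mpr ⟨b, by omega, rfl⟩)), ?_⟩⟩
        simp [hsing]
  · -- coalition condition
    intro A hA
    rw [hPdef] at hA
    right
    rcases Finset.mem_insert.mp hA with rfl | hA
    · -- A = P1, partner P2
      refine ⟨P2, ?_, Ne.symm hP1P2, hd12, hndP1, hndP2, hdom12⟩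
      rw [hPdef]
      simp
    rcases Finset.mem_insert.mp hA with rfl | hA
    · -- A = P2, partner P1
      refine ⟨P1, ?_, hP1P2, hd12.symm, hndP2, hndP1, ?_⟩
      · rw [hPdef]; simp
      · rw [Set.union_comm]
        exact hdom12
    · -- A = sing b, partner P1
      obtain ⟨b, hb, rfl⟩ := (hmemPsing A).mp hA
      refine ⟨P1, ?_, hP1sing b hb, (hd1s b hb).symm, hndsing b, hndP1, hdoms1 b hb⟩
      rw [hPdef]
      simp

end CkAux

theorem ck_completeBipartite_mid (s t k : ℕ) (hs : 0 < s) (hst : s ≤ t) (hk : 2 ≤ k)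
    (hks : k + 1 ≤ s) (hsk : s ≤ 3 * k - 2) :
    kCoalitionNumber (completeBipartiteGraph (Fin s) (Fin t)) k = t - k + 3 := by
  have hsk' : s + 2 ≤ 3 * k := by omega
  rw [kCoalitionNumber]
  obtain ⟨P0, hP0, hc0⟩ := CkAux.construction s t k hs hst hk hks
  have hmem : (t - k + 3) ∈ {n | ∃ P : Finset (Set (Fin s ⊕ Fin t)),
      KCoalitionPartition (completeBipartiteGraph (Fin s) (Fin t)) k P ∧ P.card = n} :=
    ⟨P0, hP0, hc0⟩
  have hub : ∀ n ∈ {n | ∃ P : Finset (Set (Fin s ⊕ Fin t)),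
      KCoalitionPartition (completeBipartiteGraph (Fin s) (Fin t)) k P ∧ P.card = n},
      n ≤ t - k + 3 := by
    rintro n ⟨P, hP, rfl⟩
    have := CkAux.upper_bound s t k hs hst hk hks hsk' P hP
    omega
  exact le_antisymm (csSup_le ⟨_, hmem⟩ hub) (le_csSup ⟨t - k + 3, hub⟩ hmem)
end

section
/- Let s, t and k be positive integers with t ≥ s and k ≥ 2. If s ≥ 3k − 1, then the k-coalition number of the complete bipartite graph K_{s,t} satisfies C_k(K_{s,t}) = s + t − 4k + 4. -/
open SimpleGraph

/-! In `K_{s,t}` a set is `k`-dominating iff each side is either contained in it or meets it in at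
least `k` vertices; when `s, t ≥ 3k - 1` every `k`-dominating set has at least `2k` vertices, so no
part of a coalition partition dominates and every part has a partner.

Lower bound: take `S₁` with `k - 1` left and `k` right vertices, `S₂` with `k` left and `k - 1`
right vertices, and all other vertices as singletons; a left singleton completes `S₁`, a right
singleton completes `S₂`. This gives `s + t - 4k + 4` parts.

Upper bound: the partner relation has no isolated parts, so it either contains two disjoint pairs,
which already use `4k` vertices, or it is a star. The non-dominating centre `Z` of a star has
`a < k` vertices on one side, say the left. Every other part either has at least `k - a` left
vertices or covers, together with `Z`, the right side, and at most one part can do the latter. -/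

theorem sum_ncard_preimage_eq_card {α β : Type*} [Finite α] {P : Finset (Set β)}
    (hdisj : (P : Set (Set β)).PairwiseDisjoint id) (hcover : ⋃ A ∈ P, A = Set.univ)
    (f : α → β) : ∑ A ∈ P, (f ⁻¹' A).ncard = Nat.card α := by
  rw [← finsum_mem_coe_finset, ← P.finite_toSet.ncard_biUnion (s := (f ⁻¹' ·))
    (fun _ _ ↦ Set.toFinite _) (fun A hA B hB hAB ↦ (hdisj hA hB hAB).preimage f)]
  simp [← Set.preimage_iUnion₂, hcover]

theorem ncard_preimage_union_of_disjoint {α β : Type*} [Finite α] (f : α → β) {A B : Set β}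
    (h : Disjoint A B) : (f ⁻¹' (A ∪ B)).ncard = (f ⁻¹' A).ncard + (f ⁻¹' B).ncard := by
  rw [Set.preimage_union, Set.ncard_union_eq (h.preimage f)]

section Coalitions

variable {V : Type*} {G : SimpleGraph V} {k : ℕ}

theorem KCoalition.symm {A B : Set V} (h : KCoalition G k A B) : KCoalition G k B A :=
  ⟨h.1.symm, h.2.2.1, h.2.1, Set.union_comm A B ▸ h.2.2.2⟩

theorem kCoalitionNumber_eq {n : ℕ} (hex : ∃ P, KCoalitionPartition G k P ∧ P.card = n)
    (hle : ∀ P, KCoalitionPartition G k P → P.card ≤ n) : kCoalitionNumber G k = n :=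
  IsGreatest.csSup_eq ⟨hex, by rintro _ ⟨P, hP, rfl⟩; exact hle P hP⟩

theorem KCoalitionPartition.exists_kCoalition {P : Finset (Set V)}
    (hP : KCoalitionPartition G k P) (hlarge : ∀ S, KDominatingSet G k S → k < S.ncard)
    {A : Set V} (hA : A ∈ P) : ∃ B ∈ P, B ≠ A ∧ KCoalition G k A B :=
  (hP.2.2.2 A hA).resolve_left fun h ↦ (hlarge A h.1).ne' h.2

theorem exists_finset_eq_two_parts_and_singletons [Finite V] {S₁ S₂ : Set V}
    (hdisj : Disjoint S₁ S₂) (hne₁ : S₁.Nonempty) :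
    ∃ P : Finset (Set V), (∀ A, A ∈ P ↔ A = S₁ ∨ A = S₂ ∨ ∃ v ∉ S₁ ∪ S₂, A = {v}) ∧
      P.card = (S₁ ∪ S₂)ᶜ.ncard + 2 := by
  classical
  set O := (S₁ ∪ S₂)ᶜ.toFinite.toFinset
  have hne : S₁ ≠ S₂ := fun h ↦ hne₁.ne_empty (by simpa [h] using hdisj)
  have hsingleton_ne (v) (hv₁ : v ∉ S₁) (hv₂ : v ∉ S₂) : {v} ≠ S₁ ∧ {v} ≠ S₂ :=
    ⟨fun h ↦ hv₁ (h ▸ Set.mem_singleton v), fun h ↦ hv₂ (h ▸ Set.mem_singleton v)⟩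
  refine ⟨insert S₁ (insert S₂ (O.image ({·}))), by simp [O, eq_comm], ?_⟩
  rw [Finset.card_insert_of_notMem, Finset.card_insert_of_notMem,
    Finset.card_image_of_injective _ Set.singleton_injective, Set.ncard_eq_toFinset_card _]
  · simpa [O] using fun v hv₁ hv₂ ↦ (hsingleton_ne v hv₁ hv₂).2
  · simpa [O, hne] using fun v hv₁ hv₂ ↦ (hsingleton_ne v hv₁ hv₂).1

theorem exists_kCoalitionPartition_of_two_parts [Finite V] {S₁ S₂ : Set V}
    (hdisj : Disjoint S₁ S₂) (hne₁ : S₁.Nonempty) (hne₂ : S₂.Nonempty)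
    (hS₁ : ¬ KDominatingSet G k S₁) (hS₂ : ¬ KDominatingSet G k S₂)
    (hsingleton : ∀ v ∉ S₁ ∪ S₂, ¬ KDominatingSet G k {v})
    (hjoin : ∀ v ∉ S₁ ∪ S₂, KDominatingSet G k (S₁ ∪ {v}) ∨ KDominatingSet G k (S₂ ∪ {v}))
    (hjoin₁ : ∃ v ∉ S₁ ∪ S₂, KDominatingSet G k (S₁ ∪ {v}))
    (hjoin₂ : ∃ v ∉ S₁ ∪ S₂, KDominatingSet G k (S₂ ∪ {v})) :
    ∃ P, KCoalitionPartition G k P ∧ P.card = (S₁ ∪ S₂)ᶜ.ncard + 2 := by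
  obtain ⟨P, hmem, hcard⟩ := exists_finset_eq_two_parts_and_singletons hdisj hne₁
  have hcoal₁ (v) (hv : v ∉ S₁ ∪ S₂) (h : KDominatingSet G k (S₁ ∪ {v})) :
      KCoalition G k S₁ {v} :=
    ⟨Set.disjoint_singleton_right.2 fun h' ↦ hv (.inl h'), hS₁, hsingleton v hv, h⟩
  have hcoal₂ (v) (hv : v ∉ S₁ ∪ S₂) (h : KDominatingSet G k (S₂ ∪ {v})) :
      KCoalition G k S₂ {v} :=
    ⟨Set.disjoint_singleton_right.2 fun h' ↦ hv (.inr h'), hS₂, hsingleton v hv, h⟩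
  refine ⟨P, ⟨fun A hA ↦ ?_, fun A hA B hB hAB ↦ ?_, ?_, fun A hA ↦ .inr ?_⟩, hcard⟩
  · rcases (hmem A).1 hA with rfl | rfl | ⟨v, -, rfl⟩
    exacts [hne₁, hne₂, Set.singleton_nonempty v]
  · change Disjoint A B
    rcases (hmem A).1 hA with rfl | rfl | ⟨v, hv, rfl⟩ <;>
      rcases (hmem B).1 hB with rfl | rfl | ⟨w, hw, rfl⟩ <;>
      simp_all [Set.disjoint_singleton_left, Set.disjoint_singleton_right, hdisj.symm]
  · refine Set.eq_univ_of_forall fun v ↦ Set.mem_iUnion₂.2 ?_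
    by_cases hv : v ∈ S₁ ∪ S₂
    · rcases hv with hv | hv
      exacts [⟨S₁, (hmem _).2 (.inl rfl), hv⟩, ⟨S₂, (hmem _).2 (.inr (.inl rfl)), hv⟩]
    · exact ⟨{v}, (hmem _).2 (.inr (.inr ⟨v, hv, rfl⟩)), rfl⟩
  · rcases (hmem A).1 hA with rfl | rfl | ⟨v, hv, rfl⟩
    · obtain ⟨v, hv, hdom⟩ := hjoin₁
      exact ⟨{v}, (hmem _).2 (.inr (.inr ⟨v, hv, rfl⟩)), fun h ↦ hv (.inl (h ▸ rfl)),
        hcoal₁ v hv hdom⟩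
    · obtain ⟨v, hv, hdom⟩ := hjoin₂
      exact ⟨{v}, (hmem _).2 (.inr (.inr ⟨v, hv, rfl⟩)), fun h ↦ hv (.inr (h ▸ rfl)),
        hcoal₂ v hv hdom⟩
    · rcases hjoin v hv with hdom | hdom
      · exact ⟨S₁, (hmem _).2 (.inl rfl), fun h ↦ hv (.inl (h ▸ rfl)), (hcoal₁ v hv hdom).symm⟩
      · exact ⟨S₂, (hmem _).2 (.inr (.inl rfl)), fun h ↦ hv (.inr (h ▸ rfl)),
          (hcoal₂ v hv hdom).symm⟩

end Coalitions

namespace Finset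

variable {ι : Type*}

theorem exists_disjoint_pairs_or_exists_center {P : Finset ι} {R : ι → ι → Prop}
    (hR : ∀ ⦃A B⦄, R A B → R B A) (hP : P.Nonempty) (h : ∀ A ∈ P, ∃ B ∈ P, B ≠ A ∧ R A B) :
    (∃ A ∈ P, ∃ B ∈ P, ∃ C ∈ P, ∃ D ∈ P, [A, B, C, D].Nodup ∧ R A B ∧ R C D) ∨
      ∃ Z ∈ P, ∀ X ∈ P, X ≠ Z → R X Z := by
  by_cases hpairs : ∃ A ∈ P, ∃ B ∈ P, ∃ C ∈ P, ∃ D ∈ P, [A, B, C, D].Nodup ∧ R A B ∧ R C D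
  · exact .inl hpairs
  right
  have hmeet : ∀ A ∈ P, ∀ B ∈ P, B ≠ A → R A B → ∀ X ∈ P, X ≠ A → X ≠ B →
      ∀ Y ∈ P, Y ≠ X → R X Y → Y = A ∨ Y = B := by
    intro A hA B hB hBA hAB X hX hXA hXB Y hY hYX hXY
    by_contra! hYAB
    exact hpairs ⟨A, hA, B, hB, X, hX, Y, hY, by
      simp [hBA.symm, hXA.symm, hXB.symm, hYAB.1.symm, hYAB.2.symm, hYX.symm], hAB, hXY⟩
  obtain ⟨A, hA⟩ := hP
  obtain ⟨B, hB, hBA, hAB⟩ := h A hA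
  by_cases hC : ∃ C ∈ P, C ≠ A ∧ C ≠ B
  · obtain ⟨C, hC, hCA, hCB⟩ := hC
    obtain ⟨D, hD, hDC, hCD⟩ := h C hC
    refine ⟨D, hD, fun X hX hXD ↦ ?_⟩
    have hDAB := hmeet A hA B hB hBA hAB C hC hCA hCB D hD hDC hCD
    by_cases hXC : X = C
    · exact hXC ▸ hCD
    by_cases hXAB : X = A ∨ X = B
    · rcases hXAB with rfl | rfl <;> rcases hDAB with rfl | rfl
      exacts [absurd rfl hXD, hAB, hR hAB, absurd rfl hXD]
    rw [not_or] at hXAB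
    obtain ⟨Y, hY, hYX, hXY⟩ := h X hX
    rcases hmeet C hC D hD hDC hCD X hX hXC hXD Y hY hYX hXY with rfl | rfl
    · rcases hmeet A hA B hB hBA hAB X hX hXAB.1 hXAB.2 Y hY hYX hXY with rfl | rfl
      exacts [absurd rfl hCA, absurd rfl hCB]
    · exact hXY
  · push Not at hC
    exact ⟨A, hA, fun X hX hXA ↦ hC X hX hXA ▸ hR hAB⟩

variable [DecidableEq ι]

theorem card_add_two_mul_le_sum_of_nodup {P : Finset ι} {n : ι → ℕ} {m : ℕ}
    (hpos : ∀ X ∈ P, 1 ≤ n X) {A B C D : ι} (hA : A ∈ P) (hB : B ∈ P) (hC : C ∈ P) (hD : D ∈ P)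
    (hnodup : [A, B, C, D].Nodup) (hAB : m ≤ n A + n B) (hCD : m ≤ n C + n D) :
    P.card + 2 * m ≤ ∑ X ∈ P, n X + 4 := by
  set Q := [A, B, C, D].toFinset
  have hQP : Q ⊆ P := by simp [Q, insert_subset_iff, *]
  have hQcard : Q.card = 4 := List.toFinset_card_of_nodup hnodup
  have hQsum : ∑ X ∈ Q, n X = n A + n B + (n C + n D) := by
    rw [List.sum_toFinset _ hnodup]
    simp [add_assoc]
  have hrest : (P \ Q).card ≤ ∑ X ∈ P \ Q, n X := by
    simpa using card_nsmul_le_sum (P \ Q) n 1 fun X hX ↦ hpos X (mem_sdiff.1 hX).1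
  have := sum_sdiff hQP (f := n)
  have := card_sdiff_of_subset hQP
  have := card_le_card hQP
  omega

theorem card_mul_add_le_sum {P Q : Finset ι} {Z : ι} (hZ : Z ∈ P) (hQ : Q ⊆ P.erase Z)
    {f : ι → ℕ} {c : ℕ} (hc : ∀ X ∈ Q, c ≤ f X) : Q.card * c + f Z ≤ ∑ X ∈ P, f X :=
  calc Q.card * c + f Z ≤ ∑ X ∈ Q, f X + f Z := by
        gcongr; simpa using card_nsmul_le_sum Q f c hc
    _ ≤ ∑ X ∈ P.erase Z, f X + f Z := by gcongr
    _ = ∑ X ∈ P, f X := sum_erase_add P f hZ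

theorem card_add_le_of_star {P : Finset ι} {Z : ι} (hZ : Z ∈ P) {f g : ι → ℕ} {k s t : ℕ}
    (hf : ∑ X ∈ P, f X = s) (hg : ∑ X ∈ P, g X = t) (hfZ : f Z < k) (hks : k ≤ s) (hgZ : g Z < t)
    (h : ∀ X ∈ P, X ≠ Z → k ≤ f X + f Z ∨ g X + g Z = t) :
    P.card + k ≤ s + 3 := by
  set E := (P.erase Z).filter fun X ↦ g X + g Z = t
  set Q := (P.erase Z).filter fun X ↦ k ≤ f X + f Z
  have hcard : P.card ≤ E.card + Q.card + 1 := by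
    have hcover : P.erase Z ⊆ E ∪ Q := fun X hX ↦ by
      rcases h X (mem_of_mem_erase hX) (ne_of_mem_erase hX) with h' | h'
      · exact mem_union_right _ (mem_filter.2 ⟨hX, h'⟩)
      · exact mem_union_left _ (mem_filter.2 ⟨hX, h'⟩)
    have := card_le_card hcover
    have := card_union_le E Q
    have := card_erase_of_mem hZ
    omega
  have hE : E.card * (t - g Z) + g Z ≤ t :=
    hg ▸ card_mul_add_le_sum hZ (filter_subset _ _) fun X hX ↦ by
      have := (mem_filter.1 hX).2; omega
  have hQ : Q.card * (k - f Z) + f Z ≤ s :=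
    hf ▸ card_mul_add_le_sum hZ (filter_subset _ _) fun X hX ↦ by
      have := (mem_filter.1 hX).2; omega
  have hE1 : E.card ≤ 1 := by
    have hpos : 0 < t - g Z := by omega
    exact Nat.le_of_mul_le_mul_right (by rw [one_mul]; omega) hpos
  have hQ1 : Q.card + k ≤ s + 1 := by
    rcases Nat.eq_zero_or_pos Q.card with hQ0 | hQ0
    · omega
    · have : k - f Z + f Z = k := by omega
      nlinarith
  omega

end Finset

section CompleteBipartite

variable {V W : Type*} {k : ℕ}

theorem completeBipartiteGraph_neighborSet_inl (v : V) :
    (completeBipartiteGraph V W).neighborSet (.inl v) = Set.range Sum.inr := by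
  ext (w | w) <;> simp

theorem completeBipartiteGraph_neighborSet_inr (w : W) :
    (completeBipartiteGraph V W).neighborSet (.inr w) = Set.range Sum.inl := by
  ext (v | v) <;> simp

theorem disjoint_image_inl_union_image_inr {X₁ X₂ : Set V} {Y₁ Y₂ : Set W}
    (hX : Disjoint X₁ X₂) (hY : Disjoint Y₁ Y₂) :
    Disjoint (Sum.inl '' X₁ ∪ Sum.inr '' Y₁) (Sum.inl '' X₂ ∪ Sum.inr '' Y₂) :=
  Set.disjoint_union_left.2
    ⟨Set.disjoint_union_right.2
      ⟨(Set.disjoint_image_iff Sum.inl_injective).2 hX, Set.disjoint_image_inl_image_inr⟩,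
    Set.disjoint_union_right.2
      ⟨Set.disjoint_image_inl_image_inr.symm, (Set.disjoint_image_iff Sum.inr_injective).2 hY⟩⟩

variable [Finite V] [Finite W]

theorem ncard_eq_ncard_preimage_inl_add (S : Set (V ⊕ W)) :
    S.ncard = (Sum.inl ⁻¹' S).ncard + (Sum.inr ⁻¹' S).ncard := by
  conv_lhs => rw [← Set.image_preimage_inl_union_image_preimage_inr S]
  rw [Set.ncard_union_eq (Set.disjoint_image_inl_image_inr),
    Set.ncard_image_of_injective _ Sum.inl_injective,
    Set.ncard_image_of_injective _ Sum.inr_injective]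

theorem kDominatingSet_completeBipartiteGraph_iff {S : Set (V ⊕ W)} :
    KDominatingSet (completeBipartiteGraph V W) k S ↔
      ((Sum.inl ⁻¹' S).ncard = Nat.card V ∨ k ≤ (Sum.inr ⁻¹' S).ncard) ∧
      ((Sum.inr ⁻¹' S).ncard = Nat.card W ∨ k ≤ (Sum.inl ⁻¹' S).ncard) := by
  simp only [KDominatingSet, Sum.forall, completeBipartiteGraph_neighborSet_inl,
    completeBipartiteGraph_neighborSet_inr, ← Set.image_preimage_eq_inter_range,
    Set.ncard_image_of_injective _ Sum.inl_injective,
    Set.ncard_image_of_injective _ Sum.inr_injective, ← Set.eq_univ_iff_ncard,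
    Set.eq_univ_iff_forall, Set.mem_preimage, or_iff_not_imp_left, not_forall, forall_exists_index]

theorem kDominatingSet_image_inl_union_image_inr_iff {A : Set V} {B : Set W} :
    KDominatingSet (completeBipartiteGraph V W) k (Sum.inl '' A ∪ Sum.inr '' B) ↔
      (A.ncard = Nat.card V ∨ k ≤ B.ncard) ∧ (B.ncard = Nat.card W ∨ k ≤ A.ncard) := by
  simp [kDominatingSet_completeBipartiteGraph_iff, Set.preimage_image_eq _ Sum.inl_injective,
    Set.preimage_image_eq _ Sum.inr_injective]

theorem not_kDominatingSet_singleton_completeBipartiteGraph (hk : 1 ≤ k)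
    (hV : 2 ≤ Nat.card V) (hW : 2 ≤ Nat.card W) (v : V ⊕ W) :
    ¬ KDominatingSet (completeBipartiteGraph V W) k {v} := by
  rcases v with x | y
  · have := kDominatingSet_image_inl_union_image_inr_iff (k := k) (A := {x}) (B := (∅ : Set W))
    simp only [Set.image_singleton, Set.image_empty, Set.union_empty, Set.ncard_singleton,
      Set.ncard_empty] at this
    rw [this]
    omega
  · have := kDominatingSet_image_inl_union_image_inr_iff (k := k) (A := (∅ : Set V)) (B := {y})
    simp only [Set.image_singleton, Set.image_empty, Set.empty_union, Set.ncard_singleton,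
      Set.ncard_empty] at this
    rw [this]
    omega

theorem two_mul_le_ncard_of_kDominatingSet_completeBipartiteGraph (hV : 2 * k ≤ Nat.card V)
    (hW : 2 * k ≤ Nat.card W) {S : Set (V ⊕ W)}
    (hS : KDominatingSet (completeBipartiteGraph V W) k S) : 2 * k ≤ S.ncard := by
  rw [kDominatingSet_completeBipartiteGraph_iff] at hS
  rw [ncard_eq_ncard_preimage_inl_add]
  omega

theorem exists_kCoalitionPartition_completeBipartiteGraph_of_disjoint
    (hV : 2 * k ≤ Nat.card V) (hW : 2 * k ≤ Nat.card W) {X₁ X₂ : Set V} {Y₁ Y₂ : Set W}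
    (hX : Disjoint X₁ X₂) (hY : Disjoint Y₁ Y₂) (hX₁ : X₁.ncard + 1 = k) (hX₂ : X₂.ncard = k)
    (hY₁ : Y₁.ncard = k) (hY₂ : Y₂.ncard + 1 = k) :
    ∃ P : Finset (Set (V ⊕ W)), KCoalitionPartition (completeBipartiteGraph V W) k P ∧
      P.card + 4 * k = Nat.card V + Nat.card W + 4 := by
  set S₁ := Sum.inl '' X₁ ∪ Sum.inr '' Y₁ with hS₁
  set S₂ := Sum.inl '' X₂ ∪ Sum.inr '' Y₂ with hS₂
  have hS : S₁ ∪ S₂ = Sum.inl '' (X₁ ∪ X₂) ∪ Sum.inr '' (Y₁ ∪ Y₂) := by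
    rw [Set.union_union_union_comm, Set.image_union, Set.image_union]
  have hjoinV (x) (hx : x ∉ X₁ ∪ X₂) :
      KDominatingSet (completeBipartiteGraph V W) k (S₁ ∪ {.inl x}) := by
    rw [show S₁ ∪ {.inl x} = Sum.inl '' (insert x X₁) ∪ Sum.inr '' Y₁ by
      ext (_ | _) <;> simp [hS₁, or_comm], kDominatingSet_image_inl_union_image_inr_iff,
      Set.ncard_insert_of_notMem (fun h ↦ hx (.inl h))]
    omega
  have hjoinW (y) (hy : y ∉ Y₁ ∪ Y₂) :
      KDominatingSet (completeBipartiteGraph V W) k (S₂ ∪ {.inr y}) := by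
    rw [show S₂ ∪ {.inr y} = Sum.inl '' X₂ ∪ Sum.inr '' (insert y Y₂) by
      ext (_ | _) <;> simp [hS₂, or_comm], kDominatingSet_image_inl_union_image_inr_iff,
      Set.ncard_insert_of_notMem (fun h ↦ hy (.inr h))]
    omega
  have hXcard := Set.ncard_union_eq hX
  have hYcard := Set.ncard_union_eq hY
  obtain ⟨x, -, hx⟩ := Set.exists_mem_notMem_of_ncard_lt_ncard (s := X₁ ∪ X₂) (t := .univ)
    (by rw [Set.ncard_univ]; omega)
  obtain ⟨y, -, hy⟩ := Set.exists_mem_notMem_of_ncard_lt_ncard (s := Y₁ ∪ Y₂) (t := .univ)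
    (by rw [Set.ncard_univ]; omega)
  obtain ⟨P, hP, hcard⟩ := exists_kCoalitionPartition_of_two_parts (S₁ := S₁) (S₂ := S₂)
    (disjoint_image_inl_union_image_inr hX hY)
    (((Set.nonempty_of_ncard_ne_zero (by omega : Y₁.ncard ≠ 0)).image _).mono
      Set.subset_union_right)
    (((Set.nonempty_of_ncard_ne_zero (by omega : X₂.ncard ≠ 0)).image _).mono
      Set.subset_union_left)
    (by rw [hS₁, kDominatingSet_image_inl_union_image_inr_iff]; omega)
    (by rw [hS₂, kDominatingSet_image_inl_union_image_inr_iff]; omega)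
    (fun v _ ↦
      not_kDominatingSet_singleton_completeBipartiteGraph (by omega) (by omega) (by omega) v)
    (fun v hv ↦ by
      rw [hS] at hv
      rcases v with x | y
      exacts [.inl (hjoinV x (by simpa using hv)), .inr (hjoinW y (by simpa using hv))])
    ⟨.inl x, by simpa [hS] using hx, hjoinV x hx⟩ ⟨.inr y, by simpa [hS] using hy, hjoinW y hy⟩
  refine ⟨P, hP, ?_⟩
  have hcompl := Set.ncard_add_ncard_compl (S₁ ∪ S₂)
  rw [hS] at hcard hcompl
  rw [Set.ncard_union_eq Set.disjoint_image_inl_image_inr,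
    Set.ncard_image_of_injective _ Sum.inl_injective,
    Set.ncard_image_of_injective _ Sum.inr_injective, Nat.card_sum] at hcompl
  omega

theorem exists_kCoalitionPartition_completeBipartiteGraph (hk : 1 ≤ k)
    (hV : 2 * k ≤ Nat.card V) (hW : 2 * k ≤ Nat.card W) :
    ∃ P : Finset (Set (V ⊕ W)), KCoalitionPartition (completeBipartiteGraph V W) k P ∧
      P.card + 4 * k = Nat.card V + Nat.card W + 4 := by
  obtain ⟨X₁, -, hX₁⟩ := (Set.univ : Set V).exists_subset_card_eq (n := k - 1) (by simp; omega)
  obtain ⟨X₂, hX₂, hX₂card⟩ := X₁ᶜ.exists_subset_card_eq (n := k) (by rw [Set.ncard_compl]; omega)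
  obtain ⟨Y₁, -, hY₁⟩ := (Set.univ : Set W).exists_subset_card_eq (n := k) (by simp; omega)
  obtain ⟨Y₂, hY₂, hY₂card⟩ := Y₁ᶜ.exists_subset_card_eq (n := k - 1)
    (by rw [Set.ncard_compl]; omega)
  exact exists_kCoalitionPartition_completeBipartiteGraph_of_disjoint hV hW
    (Set.disjoint_of_subset_right hX₂ disjoint_compl_right)
    (Set.disjoint_of_subset_right hY₂ disjoint_compl_right) (by omega) hX₂card hY₁ (by omega)

theorem card_add_le_of_center_completeBipartiteGraph (hV : 3 * k ≤ Nat.card V + 1)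
    (hW : 3 * k ≤ Nat.card W + 1) {P : Finset (Set (V ⊕ W))}
    (hdisj : (P : Set (Set (V ⊕ W))).PairwiseDisjoint id) (hcover : ⋃ A ∈ P, A = Set.univ)
    {Z : Set (V ⊕ W)} (hZ : Z ∈ P) (hZ_not_dom : ¬ KDominatingSet (completeBipartiteGraph V W) k Z)
    (hstar : ∀ X ∈ P, X ≠ Z → KDominatingSet (completeBipartiteGraph V W) k (X ∪ Z)) :
    P.card + 4 * k ≤ Nat.card V + Nat.card W + 4 := by
  classical
  have hunion (X) (hX : X ∈ P) (hXZ : X ≠ Z) :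
      ((Sum.inl ⁻¹' X).ncard + (Sum.inl ⁻¹' Z).ncard = Nat.card V ∨
        k ≤ (Sum.inr ⁻¹' X).ncard + (Sum.inr ⁻¹' Z).ncard) ∧
      ((Sum.inr ⁻¹' X).ncard + (Sum.inr ⁻¹' Z).ncard = Nat.card W ∨
        k ≤ (Sum.inl ⁻¹' X).ncard + (Sum.inl ⁻¹' Z).ncard) := by
    have hd : Disjoint X Z := hdisj hX hZ hXZ
    simpa only [kDominatingSet_completeBipartiteGraph_iff,
      ncard_preimage_union_of_disjoint _ hd] using hstar X hX hXZ
  have hsumV := sum_ncard_preimage_eq_card hdisj hcover Sum.inl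
  have hsumW := sum_ncard_preimage_eq_card hdisj hcover Sum.inr
  have := Set.ncard_le_card (Sum.inl ⁻¹' Z)
  have := Set.ncard_le_card (Sum.inr ⁻¹' Z)
  rw [kDominatingSet_completeBipartiteGraph_iff, not_and_or, not_or, not_or, not_le,
    not_le] at hZ_not_dom
  rcases hZ_not_dom with ⟨hZV, hZk⟩ | ⟨hZW, hZk⟩
  · have := Finset.card_add_le_of_star hZ hsumW hsumV hZk (by omega) (by omega)
      fun X hX hXZ ↦ (hunion X hX hXZ).1.symm
    omega
  · have := Finset.card_add_le_of_star hZ hsumV hsumW hZk (by omega) (by omega)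
      fun X hX hXZ ↦ (hunion X hX hXZ).2.symm
    omega

theorem card_add_le_of_kCoalitionPartition_completeBipartiteGraph (hk : 1 ≤ k)
    (hV : 3 * k ≤ Nat.card V + 1) (hW : 3 * k ≤ Nat.card W + 1)
    {P : Finset (Set (V ⊕ W))} (hP : KCoalitionPartition (completeBipartiteGraph V W) k P) :
    P.card + 4 * k ≤ Nat.card V + Nat.card W + 4 := by
  classical
  obtain ⟨hne, hdisj, hcover, -⟩ := id hP
  have hdom (S : Set (V ⊕ W)) (hS : KDominatingSet (completeBipartiteGraph V W) k S) :
      2 * k ≤ S.ncard :=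
    two_mul_le_ncard_of_kDominatingSet_completeBipartiteGraph (by omega) (by omega) hS
  have hlarge (S : Set (V ⊕ W)) (hS : KDominatingSet (completeBipartiteGraph V W) k S) :
      k < S.ncard := by
    have := hdom S hS
    omega
  rcases P.eq_empty_or_nonempty with rfl | hPne
  · rw [Finset.card_empty]
    omega
  rcases Finset.exists_disjoint_pairs_or_exists_center
      (R := fun A B ↦ KDominatingSet (completeBipartiteGraph V W) k (A ∪ B))
      (fun A B h ↦ Set.union_comm A B ▸ h) hPne
      (fun A hA ↦ (hP.exists_kCoalition hlarge hA).imp fun B ⟨hB, hBA, h⟩ ↦ ⟨hB, hBA, h.2.2.2⟩)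
    with ⟨A, hA, B, hB, C, hC, D, hD, hnodup, hAB, hCD⟩ | ⟨Z, hZ, hstar⟩
  · have hpair {X Y} (hX : X ∈ P) (hY : Y ∈ P) (hXY : X ≠ Y)
        (h : KDominatingSet (completeBipartiteGraph V W) k (X ∪ Y)) :
        2 * k ≤ X.ncard + Y.ncard :=
      Set.ncard_union_eq (hdisj hX hY hXY) ▸ hdom _ h
    have := Finset.card_add_two_mul_le_sum_of_nodup (fun X hX ↦ (Set.ncard_pos).2 (hne X hX))
      hA hB hC hD hnodup (hpair hA hB (by simp_all) hAB) (hpair hC hD (by simp_all) hCD)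
    have := sum_ncard_preimage_eq_card hdisj hcover id
    simp only [Set.preimage_id, Nat.card_sum] at this
    omega
  · obtain ⟨-, -, -, -, hZ_not_dom, -⟩ := hP.exists_kCoalition hlarge hZ
    exact card_add_le_of_center_completeBipartiteGraph hV hW hdisj hcover hZ hZ_not_dom hstar

end CompleteBipartite

theorem ck_completeBipartite_large_general (s t k : ℕ) (hst : s ≤ t) (hk : 2 ≤ k)
    (hks : 3 * k - 1 ≤ s) :
    kCoalitionNumber (completeBipartiteGraph (Fin s) (Fin t)) k = s + t - 4 * k + 4 := by
  obtain ⟨P, hP, hcard⟩ :=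
    exists_kCoalitionPartition_completeBipartiteGraph (V := Fin s) (W := Fin t) (k := k)
      (by omega) (by rw [Nat.card_fin]; omega) (by rw [Nat.card_fin]; omega)
  rw [Nat.card_fin, Nat.card_fin] at hcard
  refine kCoalitionNumber_eq ⟨P, hP, by omega⟩ fun Q hQ ↦ ?_
  have := card_add_le_of_kCoalitionPartition_completeBipartiteGraph (by omega)
    (by rw [Nat.card_fin]; omega) (by rw [Nat.card_fin]; omega) hQ
  rw [Nat.card_fin, Nat.card_fin] at this
  omega

theorem ck_completeBipartite_large (s t k : ℕ) (hs : 0 < s) (hst : s ≤ t) (hk : 2 ≤ k)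
    (hks : 3 * k - 1 ≤ s) :
    kCoalitionNumber (completeBipartiteGraph (Fin s) (Fin t)) k = s + t - 4 * k + 4 :=
  ck_completeBipartite_large_general s t k hst hk hks
end

section
/- Let s, t and k be positive integers with t ≥ s ≥ k. If k ≤ s ≤ 3k − 2, then the total k-coalition number of the complete bipartite graph K_{s,t} satisfies TC_k(K_{s,t}) = t − k + 2. -/
open SimpleGraph

/-- A set `S` is a total `k`-dominating set of `G` if every vertex of `G`
has at least `k` neighbors in `S`. -/
def TotalKDominatingSet {V : Type*} (G : SimpleGraph V) (k : ℕ) (S : Set V) : Prop :=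
  ∀ v : V, k ≤ (S ∩ G.neighborSet v).ncard

/-- Two disjoint sets `A` and `B` form a total `k`-coalition in `G` if neither is a
total `k`-dominating set of `G` but their union is. -/
def TotalKCoalition {V : Type*} (G : SimpleGraph V) (k : ℕ) (A B : Set V) : Prop :=
  Disjoint A B ∧ ¬ TotalKDominatingSet G k A ∧ ¬ TotalKDominatingSet G k B ∧
    TotalKDominatingSet G k (A ∪ B)

/-- A total `k`-coalition partition of `G` is a partition of the vertex set in which every
part forms a total `k`-coalition with another part. -/
def TotalKCoalitionPartition {V : Type*} (G : SimpleGraph V) (k : ℕ)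
    (P : Finset (Set V)) : Prop :=
  (∀ A ∈ P, A.Nonempty) ∧
  (P : Set (Set V)).PairwiseDisjoint id ∧
  (⋃ A ∈ P, A) = (Set.univ : Set V) ∧
  ∀ A ∈ P, ∃ B ∈ P, B ≠ A ∧ TotalKCoalition G k A B

/-- The total `k`-coalition number of `G`: the maximum cardinality of a
total `k`-coalition partition of `G`. -/
noncomputable def totalKCoalitionNumber {V : Type*} (G : SimpleGraph V) (k : ℕ) : ℕ :=
  sSup {n | ∃ P : Finset (Set V), TotalKCoalitionPartition G k P ∧ P.card = n}


set_option linter.unusedSectionVars false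
set_option linter.unusedVariables false


section Helpers
variable {ι : Type*} [DecidableEq ι]

lemma helper_card_le_sum (Q : Finset ι) (f : ι → ℕ) (h1 : ∀ i ∈ Q, 1 ≤ f i) :
    Q.card ≤ ∑ i ∈ Q, f i := by
  simpa using Finset.card_nsmul_le_sum Q f 1 h1

lemma helper_single (Q : Finset ι) (f : ι → ℕ) {x : ι} (hx : x ∈ Q) : f x ≤ ∑ i ∈ Q, f i :=
  Finset.single_le_sum (fun i _ => Nat.zero_le _) hx

lemma helper_one (Q : Finset ι) (f : ι → ℕ) {x : ι} (hx : x ∈ Q)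
    (h1 : ∀ i ∈ Q, 1 ≤ f i) : f x + Q.card ≤ ∑ i ∈ Q, f i + 1 := by
  have h2 : (Q.erase x).card ≤ ∑ i ∈ Q.erase x, f i :=
    helper_card_le_sum _ _ (fun i hi => h1 i (Finset.mem_of_mem_erase hi))
  have h3 := Finset.sum_erase_add Q f hx
  have h4 : (Q.erase x).card + 1 = Q.card := Finset.card_erase_add_one hx
  omega

lemma helper_two (Q : Finset ι) (f : ι → ℕ) {x y : ι} (hx : x ∈ Q) (hy : y ∈ Q)
    (hxy : x ≠ y) (h1 : ∀ i ∈ Q, 1 ≤ f i) :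
    f x + f y + Q.card ≤ ∑ i ∈ Q, f i + 2 := by
  have hy' : y ∈ Q.erase x := Finset.mem_erase.mpr ⟨Ne.symm hxy, hy⟩
  have h2 := helper_one (Q.erase x) f hy' (fun i hi => h1 i (Finset.mem_of_mem_erase hi))
  have h3 := Finset.sum_erase_add Q f hx
  have h4 : (Q.erase x).card + 1 = Q.card := Finset.card_erase_add_one hx
  omega

lemma helper_pair (Q : Finset ι) (f : ι → ℕ) {x y : ι} (hx : x ∈ Q) (hy : y ∈ Q)
    (hxy : x ≠ y) : f x + f y ≤ ∑ i ∈ Q, f i := by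
  have hy' : y ∈ Q.erase x := Finset.mem_erase.mpr ⟨Ne.symm hxy, hy⟩
  have h2 : f y ≤ ∑ i ∈ Q.erase x, f i := helper_single _ _ hy'
  have h3 := Finset.sum_erase_add Q f hx
  omega

lemma core_lemma {P : Finset ι} {e g : ι → ℕ} {k s t : ℕ}
    (hk : 1 ≤ k) (hs : k ≤ s) (hs3 : s + 2 ≤ 3 * k) (hst : s ≤ t)
    (hes : ∑ i ∈ P, e i = s) (hgt : ∑ i ∈ P, g i = t)
    (hne : ∀ i ∈ P, 1 ≤ e i + g i)
    (hnd : ∀ i ∈ P, ¬(k ≤ e i ∧ k ≤ g i))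
    (hpart : ∀ i ∈ P, ∃ j ∈ P, j ≠ i ∧ k ≤ e i + e j ∧ k ≤ g i + g j) :
    P.card + k ≤ t + 2 := by
  classical
  set Z := P.filter (fun i => g i = 0) with hZdef
  set H := P.filter (fun i => k ≤ g i) with hHdef
  set Q := P.filter (fun i => ¬ k ≤ g i ∧ ¬ g i = 0) with hQdef
  have key : ∀ f : ι → ℕ, ∑ i ∈ H, f i + (∑ i ∈ Z, f i + ∑ i ∈ Q, f i) = ∑ i ∈ P, f i := by
    intro f
    have h1 := Finset.sum_filter_add_sum_filter_not P (fun i => k ≤ g i) f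
    have h2 := Finset.sum_filter_add_sum_filter_not
      (P.filter (fun i => ¬ k ≤ g i)) (fun i => g i = 0) f
    rw [Finset.filter_filter, Finset.filter_filter] at h2
    have e1 : P.filter (fun i => ¬ k ≤ g i ∧ g i = 0) = Z := by
      ext i
      simp only [hZdef, Finset.mem_filter]
      constructor
      · rintro ⟨hi, _, h⟩; exact ⟨hi, h⟩
      · rintro ⟨hi, h⟩; exact ⟨hi, by omega, h⟩
    rw [e1] at h2
    rw [← h1, ← h2]
  have hsE : ∑ i ∈ H, e i + (∑ i ∈ Z, e i + ∑ i ∈ Q, e i) = s := by rw [key]; exact hes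
  have hsG : ∑ i ∈ H, g i + (∑ i ∈ Z, g i + ∑ i ∈ Q, g i) = t := by rw [key]; exact hgt
  have hcard : H.card + (Z.card + Q.card) = P.card := by
    have := key (fun _ => 1)
    simpa using this
  have hZe : ∀ i ∈ Z, 1 ≤ e i := by
    intro i hi
    rw [hZdef, Finset.mem_filter] at hi
    have := hne i hi.1; omega
  have hQg : ∀ i ∈ Q, 1 ≤ g i := by
    intro i hi
    rw [hQdef, Finset.mem_filter] at hi
    omega
  have hHg : ∀ i ∈ H, k ≤ g i := by
    intro i hi
    rw [hHdef, Finset.mem_filter] at hi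
    exact hi.2
  have hHsum : H.card * k ≤ ∑ i ∈ H, g i := by
    have := Finset.card_nsmul_le_sum H g k hHg
    simpa [smul_eq_mul] using this
  rcases Finset.eq_empty_or_nonempty Z with hZe0 | hZne
  · -- Case 1 : every part has g ≥ 1
    have hallg : ∀ i ∈ P, 1 ≤ g i := by
      intro i hi
      by_contra hc
      have : i ∈ Z := by
        rw [hZdef, Finset.mem_filter]; exact ⟨hi, by omega⟩
      rw [hZe0] at this; exact absurd this (Finset.notMem_empty i)
    have hPne : P.Nonempty := by
      rcases Finset.eq_empty_or_nonempty P with h | h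
      · exfalso; rw [h] at hes; simp at hes; omega
      · exact h
    obtain ⟨i₀, hi₀⟩ := hPne
    obtain ⟨j₀, hj₀P, hj₀ne, _, hgg⟩ := hpart i₀ hi₀
    have := helper_two P g hi₀ hj₀P (Ne.symm hj₀ne) hallg
    omega
  · -- Case 2 : Z nonempty
    obtain ⟨i₀, hi₀Z⟩ := hZne
    have hi₀P : i₀ ∈ P := (Finset.mem_filter.mp hi₀Z).1
    have hgi₀ : g i₀ = 0 := (Finset.mem_filter.mp hi₀Z).2
    obtain ⟨B₀, hB₀P, hB₀ne, heB₀, hgB₀⟩ := hpart i₀ hi₀P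
    have hgB₀' : k ≤ g B₀ := by omega
    have hB₀H : B₀ ∈ H := Finset.mem_filter.mpr ⟨hB₀P, hgB₀'⟩
    have heB₀lt : ¬ k ≤ e B₀ := fun h => hnd B₀ hB₀P ⟨h, hgB₀'⟩
    have hHpos : 1 ≤ H.card := Finset.card_pos.mpr ⟨B₀, hB₀H⟩
    -- bound (*) : Z.card + k ≤ s + 1
    have hZone := helper_one Z e hi₀Z hZe
    have hB₀sum : e B₀ ≤ ∑ i ∈ H, e i := helper_single H e hB₀H
    have hstar : Z.card + k ≤ s + 1 := by omega
    by_cases hcase : Z.card + H.card + k ≤ H.card * k + 2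
    · -- Subcase 2a
      have hQsum : Q.card ≤ ∑ i ∈ Q, g i := helper_card_le_sum Q g hQg
      omega
    · -- Subcase 2b
      have hcase2 : H.card * k + 3 ≤ Z.card + H.card + k := by omega
      -- k ≥ 2
      have hk2 : 2 ≤ k := by
        by_contra hc
        have hk1 : k = 1 := by omega
        subst hk1
        -- a ≥ 2 from hcase2 since h*1 = h
        simp only [mul_one] at hcase2
        omega
      -- a ≥ 2
      have ha2 : 2 ≤ Z.card := by
        obtain ⟨h', hh'⟩ := Nat.exists_eq_add_of_le hHpos
        have hmul : h' ≤ h' * k := Nat.le_mul_of_pos_right h' (by omega)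
        have : H.card * k = k + h' * k := by rw [hh']; ring
        omega
      -- h ≤ 2
      have hh2 : H.card ≤ 2 := by
        by_contra hc
        have hc3 : 3 ≤ H.card := by omega
        have hexp : H.card * k = H.card * (k - 1) + H.card := by
          obtain ⟨k', rfl⟩ : ∃ k', k = k' + 1 := ⟨k - 1, by omega⟩
          simp [Nat.mul_succ]
        have hmul : 3 * (k - 1) ≤ H.card * (k - 1) := Nat.mul_le_mul_right (k - 1) hc3
        omega
      by_cases hC0 : ∃ C0 ∈ Q, e C0 = 0
      · -- branch (α) : some part of Q misses L entirely
        obtain ⟨C0, hC0Q, heC0⟩ := hC0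
        have hC0P : C0 ∈ P := (Finset.mem_filter.mp hC0Q).1
        have hgC0lt : ¬ k ≤ g C0 := (Finset.mem_filter.mp hC0Q).2.1
        obtain ⟨D, hDP, hDne, heD, hgD⟩ := hpart C0 hC0P
        have heD' : k ≤ e D := by omega
        have hgDlt : ¬ k ≤ g D := fun h => hnd D hDP ⟨heD', h⟩
        have hgDpos : 1 ≤ g D := by omega
        have hDQ : D ∈ Q := Finset.mem_filter.mpr ⟨hDP, hgDlt, by omega⟩
        have hDneC0 : C0 ≠ D := by
          intro h; rw [h] at heC0; omega
        have hDsum : e D ≤ ∑ i ∈ Q, e i := helper_single Q e hDQ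
        -- a + 2k ≤ s + 1, hence a + 1 ≤ k
        have ha1k : Z.card + 1 ≤ k := by omega
        -- t bound
        have hQtwo := helper_two Q g hC0Q hDQ hDneC0 hQg
        -- goal : P.card + k ≤ t + 2
        have hexp : H.card * k = H.card * (k - 1) + H.card := by
          obtain ⟨k', rfl⟩ : ∃ k', k = k' + 1 := ⟨k - 1, by omega⟩
          simp [Nat.mul_succ]
        have hmul : k - 1 ≤ H.card * (k - 1) := Nat.le_mul_of_pos_left (k - 1) (by omega)
        omega
      · -- branch (β) : every part of Q meets L
        push_neg at hC0
        have hQe : ∀ i ∈ Q, 1 ≤ e i := fun i hi => by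
          have := hC0 i hi; omega
        have hQesum : Q.card ≤ ∑ i ∈ Q, e i := helper_card_le_sum Q e hQe
        have hh12 : H.card = 1 ∨ H.card = 2 := by omega
        rcases hh12 with hh1 | hh2'
        · -- h = 1 : H = {B₀}
          have hHsing : H = {B₀} := by
            obtain ⟨x, hx⟩ := Finset.card_eq_one.mp hh1
            rw [hx] at hB₀H ⊢
            rw [Finset.mem_singleton] at hB₀H
            rw [hB₀H]
          have hHesum : ∑ i ∈ H, e i = e B₀ := by rw [hHsing, Finset.sum_singleton]
          omega
        · -- h = 2
          have hcardE : (H.erase B₀).card = 1 := by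
            rw [Finset.card_erase_of_mem hB₀H, hh2']
          obtain ⟨B', hB'⟩ := Finset.card_eq_one.mp hcardE
          have hB'mem : B' ∈ H.erase B₀ := by rw [hB']; exact Finset.mem_singleton_self B'
          have hB'H : B' ∈ H := Finset.mem_of_mem_erase hB'mem
          have hB'ne : B' ≠ B₀ := (Finset.mem_erase.mp hB'mem).1
          have hB'P : B' ∈ P := (Finset.mem_filter.mp hB'H).1
          have hgB' : k ≤ g B' := hHg B' hB'H
          -- a ≥ k + 1 from hcase2 with h = 2
          have hak1 : k + 1 ≤ Z.card := by
            rw [hh2'] at hcase2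
            omega
          by_cases heB'pos : 1 ≤ e B'
          · -- e B' ≥ 1 : direct count
            have hpairH : e B₀ + e B' ≤ ∑ i ∈ H, e i := helper_pair H e hB₀H hB'H (Ne.symm hB'ne)
            omega
          · -- e B' = 0 : derive a contradiction
            exfalso
            have heB'0 : e B' = 0 := by omega
            obtain ⟨D', hD'P, hD'ne, heD', hgD'⟩ := hpart B' hB'P
            have heD'k : k ≤ e D' := by omega
            have hgD'lt : ¬ k ≤ g D' := fun h => hnd D' hD'P ⟨heD'k, h⟩
            rcases Nat.eq_zero_or_pos (g D') with hgD'0 | hgD'pos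
            · -- D' ∈ Z
              have hD'Z : D' ∈ Z := Finset.mem_filter.mpr ⟨hD'P, hgD'0⟩
              by_cases hD'i₀ : D' = i₀
              · -- D' = i₀ : pick another element of Z
                subst hD'i₀
                have hZerase : (Z.erase D').Nonempty := by
                  rw [← Finset.card_pos, Finset.card_erase_of_mem hD'Z]
                  omega
                obtain ⟨i₁, hi₁e⟩ := hZerase
                have hi₁Z : i₁ ∈ Z := Finset.mem_of_mem_erase hi₁e
                have hi₁ne : i₁ ≠ D' := (Finset.mem_erase.mp hi₁e).1
                have hi₁P : i₁ ∈ P := (Finset.mem_filter.mp hi₁Z).1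
                have hgi₁ : g i₁ = 0 := (Finset.mem_filter.mp hi₁Z).2
                obtain ⟨B₁, hB₁P, hB₁ne, heB₁, hgB₁⟩ := hpart i₁ hi₁P
                have hgB₁' : k ≤ g B₁ := by omega
                have hB₁H : B₁ ∈ H := Finset.mem_filter.mpr ⟨hB₁P, hgB₁'⟩
                have hZtwo := helper_two Z e hD'Z hi₁Z (Ne.symm hi₁ne) hZe
                by_cases hB₁B' : B₁ = B'
                · -- partner of i₁ is B', which misses L : e i₁ ≥ k
                  rw [hB₁B'] at heB₁
                  omega
                · -- partner of i₁ is B₀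
                  have hB₁B₀ : B₁ = B₀ := by
                    have : B₁ ∈ H.erase B₀ ∨ B₁ = B₀ := by
                      by_cases h : B₁ = B₀
                      · exact Or.inr h
                      · exact Or.inl (Finset.mem_erase.mpr ⟨h, hB₁H⟩)
                    rcases this with h | h
                    · rw [hB'] at h; exact absurd (Finset.mem_singleton.mp h) hB₁B'
                    · exact h
                  rw [hB₁B₀] at heB₁
                  omega
              · -- D' ≠ i₀
                have hZtwo := helper_two Z e hD'Z hi₀Z hD'i₀ hZe
                omega
            · -- D' ∈ Q (since g D' ≥ 1 and g D' < k)
              have hD'Q : D' ∈ Q := Finset.mem_filter.mpr ⟨hD'P, hgD'lt, by omega⟩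
              have hD'sum : e D' ≤ ∑ i ∈ Q, e i := helper_single Q e hD'Q
              omega
end Helpers

section Graph
variable {s t k : ℕ}

variable {s t k : ℕ}

lemma neighborSet_inl (s t : ℕ) (a : Fin s) :
    (completeBipartiteGraph (Fin s) (Fin t)).neighborSet (Sum.inl a) = Set.range Sum.inr := by
  ext v; cases v <;> simp

lemma neighborSet_inr (s t : ℕ) (b : Fin t) :
    (completeBipartiteGraph (Fin s) (Fin t)).neighborSet (Sum.inr b) = Set.range Sum.inl := by
  ext v; cases v <;> simp

lemma tkd_iff (hs : 0 < s) (ht : 0 < t) (S : Set (Fin s ⊕ Fin t)) :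
    TotalKDominatingSet (completeBipartiteGraph (Fin s) (Fin t)) k S ↔
      (k ≤ (S ∩ Set.range Sum.inl).ncard ∧ k ≤ (S ∩ Set.range Sum.inr).ncard) := by
  constructor
  · intro hS
    constructor
    · have := hS (Sum.inr ⟨0, ht⟩); rwa [neighborSet_inr] at this
    · have := hS (Sum.inl ⟨0, hs⟩); rwa [neighborSet_inl] at this
  · rintro ⟨h1, h2⟩ v
    cases v with
    | inl a => rw [neighborSet_inl]; exact h2
    | inr b => rw [neighborSet_inr]; exact h1

lemma ncard_range_inl (s t : ℕ) : (Set.range (Sum.inl : Fin s → Fin s ⊕ Fin t)).ncard = s := by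
  rw [← Set.image_univ, Set.ncard_image_of_injective _ Sum.inl_injective, Set.ncard_univ,
    Nat.card_eq_fintype_card, Fintype.card_fin]

lemma ncard_range_inr (s t : ℕ) : (Set.range (Sum.inr : Fin t → Fin s ⊕ Fin t)).ncard = t := by
  rw [← Set.image_univ, Set.ncard_image_of_injective _ Sum.inr_injective, Set.ncard_univ,
    Nat.card_eq_fintype_card, Fintype.card_fin]

lemma ncard_seg (t m : ℕ) (hm : m ≤ t) : ({i : Fin t | i.val < m}).ncard = m := by
  have h1 : {i : Fin t | i.val < m} = Set.range (Fin.castLE hm) := by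
    ext i
    constructor
    · intro hi; exact ⟨⟨i.val, hi⟩, by ext; simp⟩
    · rintro ⟨j, rfl⟩; exact j.isLt
  rw [h1, ← Set.image_univ, Set.ncard_image_of_injective _ (Fin.castLE_injective hm),
    Set.ncard_univ, Nat.card_eq_fintype_card, Fintype.card_fin]

lemma sum_ncard_inter {V : Type*} [Fintype V] (L : Set V) (P : Finset (Set V))
    (hdisj : (P : Set (Set V)).PairwiseDisjoint id) :
    ∑ A ∈ P, (A ∩ L).ncard = ((⋃ A ∈ P, A) ∩ L).ncard := by
  classical
  induction P using Finset.induction_on with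
  | empty => simp
  | @insert A P hA ih =>
    have hdisj' : (P : Set (Set V)).PairwiseDisjoint id := by
      apply hdisj.subset
      rw [Finset.coe_insert]
      exact Set.subset_insert _ _
    have hAU : Disjoint A (⋃ B ∈ P, B) := by
      rw [Set.disjoint_iUnion₂_right]
      intro B hB
      exact hdisj (by simp) (by simp [hB]) (by rintro rfl; exact hA hB)
    rw [Finset.sum_insert hA, ih hdisj', Finset.set_biUnion_insert,
      Set.union_inter_distrib_right]
    rw [Set.ncard_union_eq (Set.disjoint_of_subset Set.inter_subset_left
      Set.inter_subset_left hAU) (Set.toFinite _) (Set.toFinite _)]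

lemma part_card_le {s t k : ℕ} (hk : 0 < k) (hks : k ≤ s) (hst : s ≤ t) (hsk : s ≤ 3 * k - 2)
    (P : Finset (Set (Fin s ⊕ Fin t)))
    (hP : TotalKCoalitionPartition (completeBipartiteGraph (Fin s) (Fin t)) k P) :
    P.card + k ≤ t + 2 := by
  classical
  obtain ⟨hne, hdisj, hcover, hcoal⟩ := hP
  have hs0 : 0 < s := lt_of_lt_of_le hk hks
  have ht0 : 0 < t := lt_of_lt_of_le hs0 hst
  set L : Set (Fin s ⊕ Fin t) := Set.range Sum.inl with hL
  set R : Set (Fin s ⊕ Fin t) := Set.range Sum.inr with hR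
  have hLR : L ∪ R = Set.univ := by
    ext v; cases v <;> simp [hL, hR]
  apply core_lemma (e := fun A => (A ∩ L).ncard) (g := fun A => (A ∩ R).ncard)
    (s := s) (t := t)
  · exact hk
  · exact hks
  · omega
  · exact hst
  · rw [sum_ncard_inter L P hdisj, hcover, Set.univ_inter, hL, ncard_range_inl]
  · rw [sum_ncard_inter R P hdisj, hcover, Set.univ_inter, hR, ncard_range_inr]
  · intro A hA
    have hAne := hne A hA
    have hsub : A ⊆ (A ∩ L) ∪ (A ∩ R) := by
      rw [← Set.inter_union_distrib_left, hLR, Set.inter_univ]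
    have h1 : 1 ≤ A.ncard := (Set.ncard_pos (Set.toFinite _)).mpr hAne
    have h2 : A.ncard ≤ ((A ∩ L) ∪ (A ∩ R)).ncard :=
      Set.ncard_le_ncard hsub (Set.toFinite _)
    have h3 := Set.ncard_union_le (A ∩ L) (A ∩ R)
    omega
  · intro A hA hcon
    obtain ⟨B, hBP, hBne, _, hnA, _, _⟩ := hcoal A hA
    exact hnA ((tkd_iff hs0 ht0 A).mpr hcon)
  · intro A hA
    obtain ⟨B, hBP, hBne, _, _, _, hU⟩ := hcoal A hA
    refine ⟨B, hBP, hBne, ?_, ?_⟩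
    · have h1 := ((tkd_iff hs0 ht0 _).mp hU).1
      rw [Set.union_inter_distrib_right] at h1
      exact le_trans h1 (Set.ncard_union_le _ _)
    · have h1 := ((tkd_iff hs0 ht0 _).mp hU).2
      rw [Set.union_inter_distrib_right] at h1
      exact le_trans h1 (Set.ncard_union_le _ _)

lemma lower_part {s t k : ℕ} (hk : 0 < k) (hks : k ≤ s) (hst : s ≤ t) :
    ∃ P : Finset (Set (Fin s ⊕ Fin t)),
      TotalKCoalitionPartition (completeBipartiteGraph (Fin s) (Fin t)) k P ∧
      P.card = t - k + 2 := by
  classical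
  have hs0 : 0 < s := lt_of_lt_of_le hk hks
  have ht0 : 0 < t := lt_of_lt_of_le hs0 hst
  have hkt : k ≤ t := le_trans hks hst
  set G := completeBipartiteGraph (Fin s) (Fin t) with hG
  set A0 : Set (Fin s ⊕ Fin t) :=
    Set.range Sum.inl ∪ Sum.inr '' {i : Fin t | i.val < k - 1} with hA0
  set F : Finset (Fin t) := Finset.univ.filter (fun i => k - 1 ≤ i.val) with hF
  set P : Finset (Set (Fin s ⊕ Fin t)) :=
    insert A0 (F.image (fun i => ({Sum.inr i} : Set (Fin s ⊕ Fin t)))) with hPdef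
  have hmemA0 : ∀ v, v ∈ A0 ↔ (∃ a, v = Sum.inl a) ∨ (∃ i : Fin t, i.val < k - 1 ∧ v = Sum.inr i) := by
    intro v
    rw [hA0]
    simp only [Set.mem_union, Set.mem_range, Set.mem_image, Set.mem_setOf_eq]
    constructor
    · rintro (⟨a, rfl⟩ | ⟨i, hi, rfl⟩)
      · exact Or.inl ⟨a, rfl⟩
      · exact Or.inr ⟨i, hi, rfl⟩
    · rintro (⟨a, rfl⟩ | ⟨i, hi, rfl⟩)
      · exact Or.inl ⟨a, rfl⟩
      · exact Or.inr ⟨i, hi, rfl⟩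
  have hmemP : ∀ X, X ∈ P ↔ X = A0 ∨ ∃ i : Fin t, k - 1 ≤ i.val ∧ X = {Sum.inr i} := by
    intro X
    rw [hPdef]
    simp only [Finset.mem_insert, Finset.mem_image, hF, Finset.mem_filter, Finset.mem_univ,
      true_and]
    constructor
    · rintro (rfl | ⟨i, hi, rfl⟩)
      · exact Or.inl rfl
      · exact Or.inr ⟨i, hi, rfl⟩
    · rintro (rfl | ⟨i, hi, rfl⟩)
      · exact Or.inl rfl
      · exact Or.inr ⟨i, hi, rfl⟩
  -- set computations
  have hA0L : A0 ∩ Set.range Sum.inl = Set.range Sum.inl :=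
    Set.inter_eq_right.mpr (hA0 ▸ Set.subset_union_left)
  have hA0R : A0 ∩ Set.range Sum.inr = Sum.inr '' {i : Fin t | i.val < k - 1} := by
    ext v; cases v <;> simp [hA0]
  have hSingL : ∀ i : Fin t, ({Sum.inr i} : Set (Fin s ⊕ Fin t)) ∩ Set.range Sum.inl = ∅ := by
    intro i; ext v; cases v <;> simp
  have hSingR : ∀ i : Fin t, ({Sum.inr i} : Set (Fin s ⊕ Fin t)) ∩ Set.range Sum.inr
      = {Sum.inr i} := by
    intro i; apply Set.inter_eq_left.mpr; simp
  have hgA0 : (A0 ∩ Set.range Sum.inr).ncard = k - 1 := by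
    rw [hA0R, Set.ncard_image_of_injective _ Sum.inr_injective, ncard_seg t (k-1) (by omega)]
  -- non-domination
  have hnotA0 : ¬ TotalKDominatingSet G k A0 := by
    intro h
    have := ((tkd_iff hs0 ht0 A0).mp h).2
    rw [hgA0] at this
    omega
  have hnotSing : ∀ i : Fin t, ¬ TotalKDominatingSet G k {Sum.inr i} := by
    intro i h
    have := ((tkd_iff hs0 ht0 _).mp h).1
    rw [hSingL i] at this
    simp [Set.ncard_empty] at this
    omega
  -- domination of unions
  have hdomU : ∀ i : Fin t, k - 1 ≤ i.val →
      TotalKDominatingSet G k (A0 ∪ {Sum.inr i}) := by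
    intro i hi
    apply (tkd_iff hs0 ht0 _).mpr
    constructor
    · rw [Set.union_inter_distrib_right, hA0L, hSingL, Set.union_empty, ncard_range_inl]
      exact hks
    · rw [Set.union_inter_distrib_right, hA0R, hSingR, Set.union_singleton]
      have hnm : (Sum.inr i : Fin s ⊕ Fin t) ∉
          (Sum.inr '' {j : Fin t | j.val < k - 1} : Set (Fin s ⊕ Fin t)) := by
        rintro ⟨j, hj, hji⟩
        have : j = i := Sum.inr_injective hji
        subst this
        simp only [Set.mem_setOf_eq] at hj
        omega
      rw [Set.ncard_insert_of_notMem hnm (Set.toFinite _),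
        Set.ncard_image_of_injective _ Sum.inr_injective, ncard_seg t (k-1) (by omega)]
      omega
  -- disjointness of A0 and singletons
  have hA0disj : ∀ i : Fin t, k - 1 ≤ i.val → Disjoint A0 ({Sum.inr i} : Set (Fin s ⊕ Fin t)) := by
    intro i hi
    rw [Set.disjoint_singleton_right, hmemA0]
    rintro (⟨a, ha⟩ | ⟨j, hj, hji⟩)
    · exact absurd ha (by simp)
    · have : j = i := Sum.inr_injective hji.symm
      subst this; omega
  have hA0ne : ∀ i : Fin t, A0 ≠ {Sum.inr i} := by
    intro i h
    have : Sum.inl (⟨0, hs0⟩ : Fin s) ∈ A0 := by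
      rw [hmemA0]; exact Or.inl ⟨_, rfl⟩
    rw [h] at this
    simp at this
  -- the distinguished partner of A0
  have hkm1t : k - 1 < t := by omega
  set istar : Fin t := ⟨k - 1, hkm1t⟩ with histar
  have histarF : ({Sum.inr istar} : Set (Fin s ⊕ Fin t)) ∈ P := by
    rw [hmemP]; exact Or.inr ⟨istar, le_refl _, rfl⟩
  refine ⟨P, ⟨?_, ?_, ?_, ?_⟩, ?_⟩
  · -- nonempty
    intro A hA
    rw [hmemP] at hA
    rcases hA with rfl | ⟨i, hi, rfl⟩
    · exact ⟨Sum.inl ⟨0, hs0⟩, by rw [hmemA0]; exact Or.inl ⟨_, rfl⟩⟩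
    · exact ⟨Sum.inr i, rfl⟩
  · -- pairwise disjoint
    intro x hx y hy hxy
    rw [Finset.mem_coe, hmemP] at hx hy
    rcases hx with rfl | ⟨i, hi, rfl⟩
    · rcases hy with rfl | ⟨j, hj, rfl⟩
      · exact absurd rfl hxy
      · exact hA0disj j hj
    · rcases hy with rfl | ⟨j, hj, rfl⟩
      · exact (hA0disj i hi).symm
      · have hij : i ≠ j := by
          intro h
          exact hxy (by rw [h])
        exact Set.disjoint_singleton_left.mpr (by simp [hij])
  · -- cover
    apply Set.eq_univ_iff_forall.mpr
    intro v
    simp only [Set.mem_iUnion]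
    cases v with
    | inl a =>
      exact ⟨A0, ⟨(hmemP A0).mpr (Or.inl rfl), (hmemA0 _).mpr (Or.inl ⟨a, rfl⟩)⟩⟩
    | inr b =>
      by_cases hb : b.val < k - 1
      · exact ⟨A0, ⟨(hmemP A0).mpr (Or.inl rfl), (hmemA0 _).mpr (Or.inr ⟨b, hb, rfl⟩)⟩⟩
      · exact ⟨{Sum.inr b}, ⟨(hmemP _).mpr (Or.inr ⟨b, by omega, rfl⟩), rfl⟩⟩
  · -- coalitions
    intro A hA
    rw [hmemP] at hA
    rcases hA with rfl | ⟨i, hi, rfl⟩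
    · refine ⟨{Sum.inr istar}, histarF, Ne.symm (hA0ne istar), ?_⟩
      exact ⟨hA0disj istar (le_refl _), hnotA0, hnotSing istar, hdomU istar (le_refl _)⟩
    · refine ⟨A0, (hmemP A0).mpr (Or.inl rfl), hA0ne i, ?_⟩
      refine ⟨(hA0disj i hi).symm, hnotSing i, hnotA0, ?_⟩
      rw [Set.union_comm]
      exact hdomU i hi
  · -- cardinality
    have hinj : Function.Injective (fun i : Fin t => ({Sum.inr i} : Set (Fin s ⊕ Fin t))) := by
      intro a b h
      simp only [Set.singleton_eq_singleton_iff] at h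
      exact Sum.inr_injective h
    have hA0nm : A0 ∉ F.image (fun i => ({Sum.inr i} : Set (Fin s ⊕ Fin t))) := by
      rw [Finset.mem_image]
      rintro ⟨i, _, h⟩
      exact hA0ne i h.symm
    have hFcard : F.card = t - (k - 1) := by
      have h1 : (F : Set (Fin t)) = {i : Fin t | ¬ i.val < k - 1} := by
        rw [hF]
        ext i
        simp [not_lt]
      have h2 : ({i : Fin t | ¬ i.val < k - 1} : Set (Fin t)) = {i : Fin t | i.val < k - 1}ᶜ := by
        ext i; simp
      have h3 := Set.ncard_add_ncard_compl ({i : Fin t | i.val < k - 1} : Set (Fin t))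
        (Set.toFinite _) (Set.toFinite _)
      rw [ncard_seg t (k-1) (by omega), Nat.card_eq_fintype_card, Fintype.card_fin] at h3
      have h4 : F.card = (({i : Fin t | i.val < k - 1} : Set (Fin t))ᶜ).ncard := by
        rw [← Set.ncard_coe_finset, h1, h2]
      omega
    rw [hPdef, Finset.card_insert_of_notMem hA0nm, Finset.card_image_of_injective _ hinj,
      hFcard]
    omega

end Graph

theorem tck_completeBipartite_mid (s t k : ℕ) (hk : 0 < k) (hks : k ≤ s) (hst : s ≤ t)
    (hsk : s ≤ 3 * k - 2) :
    totalKCoalitionNumber (completeBipartiteGraph (Fin s) (Fin t)) k = t - k + 2 := by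
  obtain ⟨P₀, hP₀, hcard₀⟩ := lower_part hk hks hst
  have hub : ∀ n ∈ {n | ∃ P : Finset (Set (Fin s ⊕ Fin t)),
      TotalKCoalitionPartition (completeBipartiteGraph (Fin s) (Fin t)) k P ∧ P.card = n},
      n ≤ t - k + 2 := by
    rintro n ⟨P, hP, rfl⟩
    have := part_card_le hk hks hst hsk P hP
    omega
  have hmem : (t - k + 2) ∈ {n | ∃ P : Finset (Set (Fin s ⊕ Fin t)),
      TotalKCoalitionPartition (completeBipartiteGraph (Fin s) (Fin t)) k P ∧ P.card = n} :=
    ⟨P₀, hP₀, hcard₀⟩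
  unfold totalKCoalitionNumber
  apply le_antisymm
  · exact csSup_le ⟨_, hmem⟩ hub
  · exact le_csSup ⟨t - k + 2, hub⟩ hmem
end

section
/- Let s, t and k be positive integers with t ≥ s ≥ k. If s ≥ 3k − 1, then the total k-coalition number of the complete bipartite graph K_{s,t} satisfies TC_k(K_{s,t}) = s + t − 4k + 4. -/
open SimpleGraph

namespace TCKaux

open Set Sum

variable {s t : ℕ}


lemma nb_inl (a : Fin s) : (completeBipartiteGraph (Fin s) (Fin t)).neighborSet (inl a) = Set.range inr := by
  ext w; cases w <;> simp [completeBipartiteGraph]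

lemma nb_inr (b : Fin t) : (completeBipartiteGraph (Fin s) (Fin t)).neighborSet (inr b) = Set.range inl := by
  ext w; cases w <;> simp [completeBipartiteGraph]

lemma tkd_iff (hs : 0 < s) (ht : 0 < t) (k : ℕ) (S : Set (Fin s ⊕ Fin t)) :
    TotalKDominatingSet (completeBipartiteGraph (Fin s) (Fin t)) k S ↔
      k ≤ (S ∩ Set.range inr).ncard ∧ k ≤ (S ∩ Set.range inl).ncard := by
  constructor
  · intro h
    refine ⟨?_, ?_⟩
    · have := h (inl ⟨0, hs⟩); rwa [nb_inl] at this
    · have := h (inr ⟨0, ht⟩); rwa [nb_inr] at this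
  · rintro ⟨h1, h2⟩ v
    cases v with
    | inl a => rw [nb_inl]; exact h1
    | inr b => rw [nb_inr]; exact h2

lemma ncard_split (S : Set (Fin s ⊕ Fin t)) :
    S.ncard = (S ∩ Set.range inl).ncard + (S ∩ Set.range inr).ncard := by
  rw [← Set.ncard_union_eq ?_ (Set.toFinite _) (Set.toFinite _)]
  · congr 1
    rw [← Set.inter_union_distrib_left]
    have : (Set.range (inl : Fin s → Fin s ⊕ Fin t)) ∪ Set.range inr = Set.univ := by
      ext v; cases v <;> simp
    rw [this, Set.inter_univ]
  · refine Set.disjoint_left.2 ?_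
    rintro x ⟨-, a, rfl⟩ ⟨-, b, h⟩; exact (inl_ne_inr h.symm).elim

lemma inter_union_ncard {V : Type*} (A B L : Set V) (h : Disjoint A B) (hf : L.Finite) :
    ((A ∪ B) ∩ L).ncard = (A ∩ L).ncard + (B ∩ L).ncard := by
  rw [Set.union_inter_distrib_right]
  exact Set.ncard_union_eq (h.mono (Set.inter_subset_left) (Set.inter_subset_left))
    (hf.subset Set.inter_subset_right) (hf.subset Set.inter_subset_right)

open scoped Classical in
lemma sum_ncard_inter {V : Type*} [Fintype V] (P : Finset (Set V))
    (hdisj : (P : Set (Set V)).PairwiseDisjoint id)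
    (hcover : (⋃ A ∈ P, A) = (Set.univ : Set V)) (L : Set V) :
    ∑ A ∈ P, (A ∩ L).ncard = L.ncard := by
  have key : ∑ A ∈ P, (A ∩ L).ncard
      = (P.biUnion (fun A => ((A ∩ L).toFinite.toFinset))).card := by
    rw [Finset.card_biUnion]
    · exact Finset.sum_congr rfl fun A _ => Set.ncard_eq_toFinset_card _ _
    · intro A hA B hB hAB
      have := hdisj hA hB hAB
      simp only [Finset.disjoint_left, Set.Finite.mem_toFinset]
      intro x hx hx'
      have hd : Disjoint A B := this
      exact Set.disjoint_left.1 (hd.mono Set.inter_subset_left Set.inter_subset_left) hx hx'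
  rw [key]
  congr 1
  rw [Set.ncard_eq_toFinset_card L L.toFinite]
  congr 1
  ext v
  simp only [Finset.mem_biUnion, Set.Finite.mem_toFinset, Set.mem_inter_iff]
  constructor
  · rintro ⟨A, -, -, hv⟩; exact hv
  · intro hv
    have : v ∈ ⋃ A ∈ P, A := hcover ▸ Set.mem_univ v
    simp only [Set.mem_iUnion] at this
    obtain ⟨A, hA, hvA⟩ := this
    exact ⟨A, hA, hvA, hv⟩

lemma ncard_range_inl : (Set.range (inl : Fin s → Fin s ⊕ Fin t)).ncard = s := by
  rw [← Set.image_univ, Set.ncard_image_of_injective _ inl_injective, Set.ncard_univ]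
  simp

lemma ncard_range_inr : (Set.range (inr : Fin t → Fin s ⊕ Fin t)).ncard = t := by
  rw [← Set.image_univ, Set.ncard_image_of_injective _ inr_injective, Set.ncard_univ]
  simp

lemma ncard_fin_interval (n m1 m2 : ℕ) (h : m2 ≤ n) :
    {a : Fin n | m1 ≤ a.val ∧ a.val < m2}.ncard = m2 - m1 := by
  rw [← Set.ncard_image_of_injective _ (Fin.val_injective)]
  have : Fin.val '' {a : Fin n | m1 ≤ a.val ∧ a.val < m2} = ↑(Finset.Ico m1 m2) := by
    ext x
    simp only [Set.mem_image, Set.mem_setOf_eq, Finset.coe_Ico, Set.mem_Ico]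
    constructor
    · rintro ⟨a, ⟨h1, h2⟩, rfl⟩; exact ⟨h1, h2⟩
    · rintro ⟨h1, h2⟩; exact ⟨⟨x, lt_of_lt_of_le h2 h⟩, ⟨h1, h2⟩, rfl⟩
  rw [this, Set.ncard_coe_finset, Nat.card_Ico]

lemma ncard_fin_lt (n m : ℕ) (h : m ≤ n) : {a : Fin n | (a : ℕ) < m}.ncard = m := by
  have h2 := ncard_fin_interval n 0 m h
  simp only [Nat.zero_le, true_and, Nat.sub_zero] at h2
  exact h2

def col (s t k : ℕ) : Fin s ⊕ Fin t → ℕ :=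
  Sum.elim (fun a => if (a : ℕ) < 2*k-1 then (if (a : ℕ) < k-1 then 0 else 1) else 2 + a)
           (fun b => if (b : ℕ) < 2*k-1 then (if (b : ℕ) < k then 0 else 1) else 2 + s + b)

def fib (s t k i : ℕ) : Set (Fin s ⊕ Fin t) := {w | col s t k w = i}

variable {k : ℕ}

lemma fib0_inl (hk : 0 < k) :
    fib s t k 0 ∩ Set.range inl = inl '' {a : Fin s | (a : ℕ) < k-1} := by
  ext w
  constructor
  · rintro ⟨hc, a, rfl⟩
    refine ⟨a, ?_, rfl⟩
    simp only [fib, col, Set.mem_setOf_eq, Sum.elim_inl] at hc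
    simp only [Set.mem_setOf_eq]
    split_ifs at hc <;> omega
  · rintro ⟨a, ha, rfl⟩
    refine ⟨?_, a, rfl⟩
    simp only [Set.mem_setOf_eq] at ha
    simp only [fib, col, Set.mem_setOf_eq, Sum.elim_inl]
    split_ifs <;> omega

lemma fib0_inr (hk : 0 < k) :
    fib s t k 0 ∩ Set.range inr = inr '' {b : Fin t | (b : ℕ) < k} := by
  ext w
  constructor
  · rintro ⟨hc, b, rfl⟩
    refine ⟨b, ?_, rfl⟩
    simp only [fib, col, Set.mem_setOf_eq, Sum.elim_inr] at hc
    simp only [Set.mem_setOf_eq]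
    split_ifs at hc <;> omega
  · rintro ⟨b, hb, rfl⟩
    refine ⟨?_, b, rfl⟩
    simp only [Set.mem_setOf_eq] at hb
    simp only [fib, col, Set.mem_setOf_eq, Sum.elim_inr]
    split_ifs <;> omega

lemma fib1_inl (hk : 0 < k) :
    fib s t k 1 ∩ Set.range inl = inl '' {a : Fin s | k-1 ≤ (a : ℕ) ∧ (a : ℕ) < 2*k-1} := by
  ext w
  constructor
  · rintro ⟨hc, a, rfl⟩
    refine ⟨a, ?_, rfl⟩
    simp only [fib, col, Set.mem_setOf_eq, Sum.elim_inl] at hc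
    simp only [Set.mem_setOf_eq]
    split_ifs at hc <;> omega
  · rintro ⟨a, ha, rfl⟩
    refine ⟨?_, a, rfl⟩
    simp only [Set.mem_setOf_eq] at ha
    simp only [fib, col, Set.mem_setOf_eq, Sum.elim_inl]
    split_ifs <;> omega

lemma fib1_inr (hk : 0 < k) :
    fib s t k 1 ∩ Set.range inr = inr '' {b : Fin t | k ≤ (b : ℕ) ∧ (b : ℕ) < 2*k-1} := by
  ext w
  constructor
  · rintro ⟨hc, b, rfl⟩
    refine ⟨b, ?_, rfl⟩
    simp only [fib, col, Set.mem_setOf_eq, Sum.elim_inr] at hc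
    simp only [Set.mem_setOf_eq]
    split_ifs at hc <;> omega
  · rintro ⟨b, hb, rfl⟩
    refine ⟨?_, b, rfl⟩
    simp only [Set.mem_setOf_eq] at hb
    simp only [fib, col, Set.mem_setOf_eq, Sum.elim_inr]
    split_ifs <;> omega

lemma fib_inl_single (a : Fin s) (ha : 2*k-1 ≤ (a : ℕ)) :
    fib s t k (2 + (a : ℕ)) = {inl a} := by
  ext w
  simp only [fib, Set.mem_setOf_eq, Set.mem_singleton_iff]
  cases w with
  | inl a' =>
    simp only [col, Sum.elim_inl]
    constructor
    · intro h
      split_ifs at h <;> [omega; omega; skip]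
      have : (a' : ℕ) = (a : ℕ) := by omega
      simp [Fin.ext_iff, this]
    · intro h
      have : a' = a := by simpa using h
      subst this
      split_ifs <;> omega
  | inr b' =>
    simp only [col, Sum.elim_inr]
    constructor
    · intro h
      split_ifs at h <;> [omega; omega; skip]
      exfalso
      have := Fin.is_lt a
      omega
    · intro h
      exact absurd h (by simp)

lemma fib_inr_single (b : Fin t) (hb : 2*k-1 ≤ (b : ℕ)) :
    fib s t k (2 + s + (b : ℕ)) = {inr b} := by
  ext w
  simp only [fib, Set.mem_setOf_eq, Set.mem_singleton_iff]
  cases w with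
  | inl a' =>
    simp only [col, Sum.elim_inl]
    constructor
    · intro h
      split_ifs at h <;> [omega; omega; skip]
      exfalso
      have := Fin.is_lt a'
      omega
    · intro h
      exact absurd h (by simp)
  | inr b' =>
    simp only [col, Sum.elim_inr]
    constructor
    · intro h
      split_ifs at h <;> [omega; omega; skip]
      have : (b' : ℕ) = (b : ℕ) := by omega
      simp [Fin.ext_iff, this]
    · intro h
      have : b' = b := by simpa using h
      subst this
      split_ifs <;> omega

lemma fib_disjoint {i j : ℕ} (hij : i ≠ j) : Disjoint (fib s t k i) (fib s t k j) := by
  rw [Set.disjoint_left]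
  intro w hw hw'
  exact hij (hw.symm.trans hw')

lemma fib_ne {i j : ℕ} (hij : i ≠ j) {w : Fin s ⊕ Fin t} (hw : w ∈ fib s t k i) :
    fib s t k i ≠ fib s t k j := by
  intro h
  exact hij (hw.symm.trans (h ▸ hw : w ∈ fib s t k j))

lemma x0 (hk : 0 < k) (hks : k ≤ s) : (fib s t k 0 ∩ Set.range inl).ncard = k - 1 := by
  rw [fib0_inl hk, Set.ncard_image_of_injective _ inl_injective, ncard_fin_lt]
  omega

lemma y0 (hk : 0 < k) (hkt : k ≤ t) : (fib s t k 0 ∩ Set.range inr).ncard = k := by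
  rw [fib0_inr hk, Set.ncard_image_of_injective _ inr_injective, ncard_fin_lt]
  omega

lemma x1 (hk : 0 < k) (hs2 : 2*k-1 ≤ s) : (fib s t k 1 ∩ Set.range inl).ncard = k := by
  rw [fib1_inl hk, Set.ncard_image_of_injective _ inl_injective, ncard_fin_interval _ _ _ hs2]
  omega

lemma y1 (hk : 0 < k) (ht2 : 2*k-1 ≤ t) : (fib s t k 1 ∩ Set.range inr).ncard = k - 1 := by
  rw [fib1_inr hk, Set.ncard_image_of_injective _ inr_injective, ncard_fin_interval _ _ _ ht2]
  omega

lemma singl_inl_l (a : Fin s) : (({inl a} : Set (Fin s ⊕ Fin t)) ∩ Set.range inl).ncard = 1 := by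
  rw [Set.inter_eq_self_of_subset_left (by simp)]
  exact Set.ncard_singleton _

lemma singl_inl_r (a : Fin s) : (({inl a} : Set (Fin s ⊕ Fin t)) ∩ Set.range inr).ncard = 0 := by
  have : ({inl a} : Set (Fin s ⊕ Fin t)) ∩ Set.range inr = ∅ := by
    ext w; simp only [Set.mem_inter_iff, Set.mem_singleton_iff, Set.mem_range, Set.mem_empty_iff_false, iff_false, not_and]
    rintro rfl ⟨b, hb⟩; exact inl_ne_inr hb.symm
  rw [this]; simp

lemma singl_inr_l (b : Fin t) : (({inr b} : Set (Fin s ⊕ Fin t)) ∩ Set.range inl).ncard = 0 := by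
  have : ({inr b} : Set (Fin s ⊕ Fin t)) ∩ Set.range inl = ∅ := by
    ext w; simp only [Set.mem_inter_iff, Set.mem_singleton_iff, Set.mem_range, Set.mem_empty_iff_false, iff_false, not_and]
    rintro rfl ⟨a, ha⟩; exact inl_ne_inr ha
  rw [this]; simp

lemma singl_inr_r (b : Fin t) : (({inr b} : Set (Fin s ⊕ Fin t)) ∩ Set.range inr).ncard = 1 := by
  rw [Set.inter_eq_self_of_subset_left (by simp)]
  exact Set.ncard_singleton _

open scoped Classical in
lemma construction (hk : 0 < k) (hks : k ≤ s) (hst : s ≤ t) (hsk : 3*k-1 ≤ s) :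
    ∃ P : Finset (Set (Fin s ⊕ Fin t)),
      ((∀ A ∈ P, A.Nonempty) ∧
       (P : Set (Set (Fin s ⊕ Fin t))).PairwiseDisjoint id ∧
       (⋃ A ∈ P, A) = (Set.univ : Set (Fin s ⊕ Fin t)) ∧
       (∀ A ∈ P, ∃ B ∈ P, B ≠ A ∧ (Disjoint A B ∧
          ¬ TotalKDominatingSet (completeBipartiteGraph (Fin s) (Fin t)) k A ∧
          ¬ TotalKDominatingSet (completeBipartiteGraph (Fin s) (Fin t)) k B ∧
          TotalKDominatingSet (completeBipartiteGraph (Fin s) (Fin t)) k (A ∪ B)))) ∧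
      P.card = s + t - 4*k + 4 := by
  have hs2 : 2*k-1 ≤ s := by omega
  have hs : 0 < s := lt_of_lt_of_le hk hks
  have ht : 0 < t := lt_of_lt_of_le hs hst
  have ht2 : 2*k-1 ≤ t := le_trans hs2 hst
  have hkt : k ≤ t := le_trans hks hst
  set V := Fin s ⊕ Fin t
  set G := completeBipartiteGraph (Fin s) (Fin t) with hG
  -- the partition
  refine ⟨Finset.image (fun v => fib s t k (col s t k v)) Finset.univ, ⟨?_, ?_, ?_, ?_⟩, ?_⟩
  · -- nonempty
    intro A hA
    simp only [Finset.mem_image, Finset.mem_univ, true_and] at hA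
    obtain ⟨v, rfl⟩ := hA
    exact ⟨v, rfl⟩
  · -- pairwise disjoint
    intro A hA B hB hAB
    simp only [Finset.coe_image, Set.mem_image, Finset.coe_univ, Set.mem_univ, true_and] at hA hB
    obtain ⟨v, rfl⟩ := hA
    obtain ⟨w, rfl⟩ := hB
    have : col s t k v ≠ col s t k w := fun h => hAB (by rw [h])
    exact fib_disjoint this
  · -- cover
    ext v
    simp only [Set.mem_iUnion, Set.mem_univ, iff_true]
    exact ⟨fib s t k (col s t k v), by simp [Finset.mem_coe], rfl⟩
  · -- coalitions
    have hmem : ∀ i : ℕ, (∃ v, col s t k v = i) →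
        fib s t k i ∈ Finset.image (fun v => fib s t k (col s t k v)) Finset.univ := by
      rintro i ⟨v, rfl⟩
      exact Finset.mem_image_of_mem _ (Finset.mem_univ v)
    have hcol0 : col s t k (inr ⟨0, ht⟩) = 0 := by
      simp only [col, Sum.elim_inr]
      split_ifs <;> omega
    have hcol1 : col s t k (inl ⟨k-1, by omega⟩) = 1 := by
      simp only [col, Sum.elim_inl]
      split_ifs <;> omega
    have h0mem := hmem 0 ⟨_, hcol0⟩
    have h1mem := hmem 1 ⟨_, hcol1⟩
    have h0ne : (fib s t k 0).Nonempty := ⟨_, hcol0⟩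
    have h1ne : (fib s t k 1).Nonempty := ⟨_, hcol1⟩
    -- not total k dominating facts
    have hnot0 : ¬ TotalKDominatingSet G k (fib s t k 0) := by
      rw [tkd_iff hs ht]
      rintro ⟨-, h2⟩
      rw [x0 hk hks] at h2
      omega
    have hnot1 : ¬ TotalKDominatingSet G k (fib s t k 1) := by
      rw [tkd_iff hs ht]
      rintro ⟨h1, -⟩
      rw [y1 hk ht2] at h1
      omega
    have hU01 : TotalKDominatingSet G k (fib s t k 0 ∪ fib s t k 1) := by
      rw [tkd_iff hs ht]
      have hd : Disjoint (fib s t k 0) (fib s t k 1) := fib_disjoint (by omega)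
      constructor
      · rw [inter_union_ncard _ _ _ hd (Set.toFinite _), y0 hk hkt, y1 hk ht2]
        omega
      · rw [inter_union_ncard _ _ _ hd (Set.toFinite _), x0 hk hks, x1 hk hs2]
        omega
    intro A hA
    simp only [Finset.mem_image, Finset.mem_univ, true_and] at hA
    obtain ⟨v, rfl⟩ := hA
    cases v with
    | inl a =>
      by_cases h1 : (a : ℕ) < 2*k-1
      · by_cases h2 : (a : ℕ) < k-1
        · -- part 0, partner part 1
          have hc : col s t k (inl a) = 0 := by
            simp only [col, Sum.elim_inl]; split_ifs <;> omega
          rw [hc]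
          exact ⟨fib s t k 1, h1mem, fib_ne (i := 1) (j := 0) (by omega) hcol1, fib_disjoint (i := 0) (j := 1) (by omega),
            hnot0, hnot1, hU01⟩
        · -- part 1, partner part 0
          have hc : col s t k (inl a) = 1 := by
            simp only [col, Sum.elim_inl]; split_ifs <;> omega
          rw [hc]
          refine ⟨fib s t k 0, h0mem, fib_ne (i := 0) (j := 1) (by omega) hcol0, fib_disjoint (i := 1) (j := 0) (by omega),
            hnot1, hnot0, ?_⟩
          rw [Set.union_comm]
          exact hU01
      · -- singleton {inl a}, partner part 0
        have hc : col s t k (inl a) = 2 + (a : ℕ) := by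
          simp only [col, Sum.elim_inl]; split_ifs <;> omega
        rw [hc, fib_inl_single a (by omega)]
        refine ⟨fib s t k 0, h0mem, ?_, ?_, ?_, hnot0, ?_⟩
        · rw [← fib_inl_single (t := t) (k := k) a (by omega)]
          exact fib_ne (i := 0) (j := 2 + (a : ℕ)) (by omega) hcol0
        · rw [← fib_inl_single (t := t) (k := k) a (by omega)]
          exact fib_disjoint (i := 2 + (a : ℕ)) (j := 0) (by omega)
        · rw [tkd_iff hs ht]
          rintro ⟨hy, -⟩
          rw [singl_inl_r] at hy
          omega
        · rw [tkd_iff hs ht]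
          have hd : Disjoint ({inl a} : Set V) (fib s t k 0) := by
            rw [← fib_inl_single (t := t) (k := k) a (by omega)]
            exact fib_disjoint (i := 2 + (a : ℕ)) (j := 0) (by omega)
          constructor
          · rw [inter_union_ncard _ _ _ hd (Set.toFinite _), singl_inl_r, y0 hk hkt]
            omega
          · rw [inter_union_ncard _ _ _ hd (Set.toFinite _), singl_inl_l, x0 hk hks]
            omega
    | inr b =>
      by_cases h1 : (b : ℕ) < 2*k-1
      · by_cases h2 : (b : ℕ) < k
        · have hc : col s t k (inr b) = 0 := by
            simp only [col, Sum.elim_inr]; split_ifs <;> omega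
          rw [hc]
          exact ⟨fib s t k 1, h1mem, fib_ne (i := 1) (j := 0) (by omega) hcol1, fib_disjoint (i := 0) (j := 1) (by omega),
            hnot0, hnot1, hU01⟩
        · have hc : col s t k (inr b) = 1 := by
            simp only [col, Sum.elim_inr]; split_ifs <;> omega
          rw [hc]
          refine ⟨fib s t k 0, h0mem, fib_ne (i := 0) (j := 1) (by omega) hcol0, fib_disjoint (i := 1) (j := 0) (by omega),
            hnot1, hnot0, ?_⟩
          rw [Set.union_comm]
          exact hU01
      · -- singleton {inr b}, partner part 1
        have hc : col s t k (inr b) = 2 + s + (b : ℕ) := by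
          simp only [col, Sum.elim_inr]; split_ifs <;> omega
        rw [hc, fib_inr_single b (by omega)]
        refine ⟨fib s t k 1, h1mem, ?_, ?_, ?_, hnot1, ?_⟩
        · rw [← fib_inr_single (s := s) (k := k) b (by omega)]
          exact fib_ne (i := 1) (j := 2 + s + (b : ℕ)) (by omega) hcol1
        · rw [← fib_inr_single (s := s) (k := k) b (by omega)]
          exact fib_disjoint (i := 2 + s + (b : ℕ)) (j := 1) (by omega)
        · rw [tkd_iff hs ht]
          rintro ⟨-, hx⟩
          rw [singl_inr_l] at hx
          omega
        · rw [tkd_iff hs ht]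
          have hd : Disjoint ({inr b} : Set V) (fib s t k 1) := by
            rw [← fib_inr_single (s := s) (k := k) b (by omega)]
            exact fib_disjoint (i := 2 + s + (b : ℕ)) (j := 1) (by omega)
          constructor
          · rw [inter_union_ncard _ _ _ hd (Set.toFinite _), singl_inr_r, y1 hk ht2]
            omega
          · rw [inter_union_ncard _ _ _ hd (Set.toFinite _), singl_inr_l, x1 hk hs2]
            omega
  · -- cardinality
    rw [show (fun v => fib s t k (col s t k v)) = (fib s t k) ∘ (col s t k) from rfl,
      ← Finset.image_image]
    rw [Finset.card_image_of_injOn ?inj]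
    case inj =>
      intro i hi j hj hij
      simp only [Finset.coe_image, Set.mem_image, Finset.coe_univ, Set.mem_univ,
        true_and] at hi
      obtain ⟨v, rfl⟩ := hi
      have : v ∈ fib s t k (col s t k v) := rfl
      rw [hij] at this
      exact this
    have himg : Finset.image (col s t k) Finset.univ =
        insert 0 (insert 1 (((Finset.Ico (2*k-1) s).image (fun a => 2 + a)) ∪
          ((Finset.Ico (2*k-1) t).image (fun b => 2 + s + b)))) := by
      ext n
      simp only [Finset.mem_image, Finset.mem_univ, true_and, Finset.mem_insert,
        Finset.mem_union, Finset.mem_Ico]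
      constructor
      · rintro ⟨v, rfl⟩
        cases v with
        | inl a =>
          simp only [col, Sum.elim_inl]
          split_ifs with hc1 hc2
          · exact Or.inl rfl
          · exact Or.inr (Or.inl rfl)
          · exact Or.inr (Or.inr (Or.inl ⟨a, ⟨by omega, a.isLt⟩, rfl⟩))
        | inr b =>
          simp only [col, Sum.elim_inr]
          split_ifs with hc1 hc2
          · exact Or.inl rfl
          · exact Or.inr (Or.inl rfl)
          · exact Or.inr (Or.inr (Or.inr ⟨b, ⟨by omega, b.isLt⟩, rfl⟩))
      · rintro (rfl | rfl | ⟨x, ⟨hx1, hx2⟩, rfl⟩ | ⟨x, ⟨hx1, hx2⟩, rfl⟩)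
        · exact ⟨inr ⟨0, ht⟩, by simp only [col, Sum.elim_inr]; split_ifs <;> omega⟩
        · exact ⟨inl ⟨k-1, by omega⟩, by simp only [col, Sum.elim_inl]; split_ifs <;> omega⟩
        · exact ⟨inl ⟨x, hx2⟩, by simp only [col, Sum.elim_inl]; split_ifs <;> omega⟩
        · exact ⟨inr ⟨x, hx2⟩, by simp only [col, Sum.elim_inr]; split_ifs <;> omega⟩
    rw [himg]
    rw [Finset.card_insert_of_notMem (by
      simp only [Finset.mem_insert, Finset.mem_union, Finset.mem_image, Finset.mem_Ico]
      push_neg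
      refine ⟨by omega, fun x hx => by omega, fun x hx => by omega⟩)]
    rw [Finset.card_insert_of_notMem (by
      simp only [Finset.mem_union, Finset.mem_image, Finset.mem_Ico]
      push_neg
      refine ⟨fun x hx => by omega, fun x hx => by omega⟩)]
    rw [Finset.card_union_of_disjoint (by
      simp only [Finset.disjoint_left, Finset.mem_image, Finset.mem_Ico]
      rintro n ⟨x, ⟨hx1, hx2⟩, rfl⟩ ⟨y, ⟨hy1, hy2⟩, hy⟩
      omega)]
    rw [Finset.card_image_of_injective _ (fun x y h => by omega),
      Finset.card_image_of_injective _ (fun x y h => by omega),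
      Nat.card_Ico, Nat.card_Ico]
    omega

lemma upper (hk : 0 < k) (hks : k ≤ s) (hst : s ≤ t) (hsk : 3*k-1 ≤ s)
    (P : Finset (Set (Fin s ⊕ Fin t)))
    (hne : ∀ A ∈ P, A.Nonempty)
    (hdisj : (P : Set (Set (Fin s ⊕ Fin t))).PairwiseDisjoint id)
    (hcover : (⋃ A ∈ P, A) = (Set.univ : Set (Fin s ⊕ Fin t)))
    (hcoal : ∀ A ∈ P, ∃ B ∈ P, B ≠ A ∧ (Disjoint A B ∧
        ¬ TotalKDominatingSet (completeBipartiteGraph (Fin s) (Fin t)) k A ∧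
        ¬ TotalKDominatingSet (completeBipartiteGraph (Fin s) (Fin t)) k B ∧
        TotalKDominatingSet (completeBipartiteGraph (Fin s) (Fin t)) k (A ∪ B))) :
    P.card ≤ s + t - 4*k + 4 := by
  classical
  have hs : 0 < s := lt_of_lt_of_le hk hks
  have ht : 0 < t := lt_of_lt_of_le hs hst
  have hkt : k ≤ t := le_trans hks hst
  set X := fun (A : Set (Fin s ⊕ Fin t)) => (A ∩ Set.range inl).ncard with hX
  set Y := fun (A : Set (Fin s ⊕ Fin t)) => (A ∩ Set.range inr).ncard with hY
  -- total counts
  have hsumX : ∑ A ∈ P, X A = s := by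
    rw [hX]; rw [sum_ncard_inter P hdisj hcover]; exact ncard_range_inl
  have hsumY : ∑ A ∈ P, Y A = t := by
    rw [hY]; rw [sum_ncard_inter P hdisj hcover]; exact ncard_range_inr
  have hsumC : ∑ A ∈ P, A.ncard = s + t := by
    have hterm : ∀ A ∈ P, A.ncard = X A + Y A := by
      intro A _
      simp only [hX, hY]
      exact ncard_split A
    rw [Finset.sum_congr rfl hterm, Finset.sum_add_distrib, hsumX, hsumY]
  have hpos : ∀ A ∈ P, 1 ≤ A.ncard := by
    intro A hA
    exact (Set.ncard_pos (Set.toFinite A)).2 (hne A hA)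
  -- choose partners
  have hch : ∀ A : Set (Fin s ⊕ Fin t), ∃ B : Set (Fin s ⊕ Fin t), A ∈ P →
      (B ∈ P ∧ B ≠ A ∧ Disjoint A B ∧
        ¬ TotalKDominatingSet (completeBipartiteGraph (Fin s) (Fin t)) k A ∧
        ¬ TotalKDominatingSet (completeBipartiteGraph (Fin s) (Fin t)) k B ∧
        TotalKDominatingSet (completeBipartiteGraph (Fin s) (Fin t)) k (A ∪ B)) := by
    intro A
    by_cases hA : A ∈ P
    · obtain ⟨B, hB, hBne, hco⟩ := hcoal A hA
      exact ⟨B, fun _ => ⟨hB, hBne, hco⟩⟩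
    · exact ⟨∅, fun h => absurd h hA⟩
  choose f hf using hch
  -- basic partner facts
  have hfP : ∀ A ∈ P, f A ∈ P := fun A hA => (hf A hA).1
  have hfne : ∀ A ∈ P, f A ≠ A := fun A hA => (hf A hA).2.1
  have hXY : ∀ A ∈ P, k ≤ X A + X (f A) ∧ k ≤ Y A + Y (f A) := by
    intro A hA
    obtain ⟨-, -, hdAB, -, -, hU⟩ := hf A hA
    rw [tkd_iff hs ht] at hU
    constructor
    · simp only [hX]
      rw [← inter_union_ncard _ _ _ hdAB (Set.toFinite _)]
      exact hU.2
    · simp only [hY]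
      rw [← inter_union_ncard _ _ _ hdAB (Set.toFinite _)]
      exact hU.1
  have hnotTkd : ∀ A ∈ P, Y A < k ∨ X A < k := by
    intro A hA
    have h0 := (hf A hA).2.2.2.1
    rw [tkd_iff hs ht] at h0
    simp only [hX, hY]
    omega
  have hpair : ∀ A ∈ P, 2*k ≤ A.ncard + (f A).ncard := by
    intro A hA
    obtain ⟨h1, h2⟩ := hXY A hA
    have e1 := ncard_split A
    have e2 := ncard_split (f A)
    simp only [hX, hY] at h1 h2
    omega
  by_cases hp3 : P.card ≤ 3
  · omega
  push_neg at hp3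
  by_cases hM : ∃ A1 ∈ P, ∃ A2 ∈ P, A1 ≠ A2 ∧ A1 ≠ f A2 ∧ f A1 ≠ A2 ∧ f A1 ≠ f A2
  · -- two disjoint coalition pairs
    obtain ⟨A1, hA1, A2, hA2, h12, h1f2, hf12, hf1f2⟩ := hM
    classical
    set Q : Finset (Set (Fin s ⊕ Fin t)) := {A1, f A1, A2, f A2} with hQ
    have hQP : Q ⊆ P := by
      intro A hA
      simp only [hQ, Finset.mem_insert, Finset.mem_singleton] at hA
      rcases hA with rfl | rfl | rfl | rfl
      · exact hA1
      · exact hfP A1 hA1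
      · exact hA2
      · exact hfP A2 hA2
    have hQcard : Q.card = 4 := by
      rw [hQ]
      rw [Finset.card_insert_of_notMem (by
        simp only [Finset.mem_insert, Finset.mem_singleton]
        push_neg
        exact ⟨(hfne A1 hA1).symm, h12, h1f2⟩)]
      rw [Finset.card_insert_of_notMem (by
        simp only [Finset.mem_insert, Finset.mem_singleton]
        push_neg
        exact ⟨hf12, hf1f2⟩)]
      rw [Finset.card_insert_of_notMem (by
        simp only [Finset.mem_singleton]
        exact (hfne A2 hA2).symm)]
      simp
    have hQsum : 4*k ≤ ∑ A ∈ Q, A.ncard := by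
      rw [hQ]
      rw [Finset.sum_insert (by
        simp only [Finset.mem_insert, Finset.mem_singleton]
        push_neg
        exact ⟨(hfne A1 hA1).symm, h12, h1f2⟩)]
      rw [Finset.sum_insert (by
        simp only [Finset.mem_insert, Finset.mem_singleton]
        push_neg
        exact ⟨hf12, hf1f2⟩)]
      rw [Finset.sum_insert (by
        simp only [Finset.mem_singleton]
        exact (hfne A2 hA2).symm)]
      rw [Finset.sum_singleton]
      have := hpair A1 hA1
      have := hpair A2 hA2
      omega
    have hsplit : ∑ A ∈ P \ Q, A.ncard + ∑ A ∈ Q, A.ncard = ∑ A ∈ P, A.ncard :=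
      Finset.sum_sdiff hQP
    have hrest : (P \ Q).card ≤ ∑ A ∈ P \ Q, A.ncard := by
      calc (P \ Q).card = ∑ _A ∈ P \ Q, 1 := by simp
      _ ≤ ∑ A ∈ P \ Q, A.ncard :=
        Finset.sum_le_sum fun A hA => hpos A (Finset.mem_sdiff.1 hA).1
    have hcardQ : (P \ Q).card = P.card - 4 := by
      rw [Finset.card_sdiff_of_subset hQP, hQcard]
    omega
  · -- star case
    push_neg at hM
    have hS : ∀ A1 ∈ P, ∀ A2 ∈ P, A1 = A2 ∨ A1 = f A2 ∨ f A1 = A2 ∨ f A1 = f A2 := by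
      intro A1 h1 A2 h2
      by_contra hcon
      push_neg at hcon
      exact hcon.2.2.2 (hM A1 h1 A2 h2 hcon.1 hcon.2.1 hcon.2.2.1)
    obtain ⟨U, hU⟩ := Finset.card_pos.1 (by omega : 0 < P.card)
    set V0 := f U with hV0
    have hV0P : V0 ∈ P := hfP U hU
    have hV0U : V0 ≠ U := hfne U hU
    have hE : 1 < ((P.erase U).erase V0).card := by
      rw [Finset.card_erase_of_mem (Finset.mem_erase.2 ⟨hV0U, hV0P⟩),
        Finset.card_erase_of_mem hU]
      omega
    obtain ⟨C1, hC1, C2, hC2, hC12⟩ := Finset.one_lt_card.1 hE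
    rw [Finset.mem_erase, Finset.mem_erase] at hC1 hC2
    obtain ⟨hC1V, hC1U, hC1P⟩ := hC1
    obtain ⟨hC2V, hC2U, hC2P⟩ := hC2
    -- every outside part points into {U, V0}
    have hout : ∀ C ∈ P, C ≠ U → C ≠ V0 → (f C = U ∨ f C = V0) := by
      intro C hC hCU hCV
      rcases hS C hC U hU with h | h | h | h
      · exact absurd h hCU
      · exact absurd h hCV
      · exact Or.inl h
      · exact Or.inr h
    set Z := f C1 with hZdef
    have hZP : Z ∈ P := hfP C1 hC1P
    have hZUV : Z = U ∨ Z = V0 := hout C1 hC1P hC1U hC1V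
    have hfC2 : f C2 = Z := by
      rcases hS C1 hC1P C2 hC2P with h | h | h | h
      · exact absurd h hC12
      · rcases hout C2 hC2P hC2U hC2V with h2 | h2
        · exact absurd (h.trans h2) hC1U
        · exact absurd (h.trans h2) hC1V
      · rcases hZUV with h2 | h2
        · exact absurd (h2 ▸ h : U = C2) (Ne.symm hC2U)
        · exact absurd (h2 ▸ h : V0 = C2) (Ne.symm hC2V)
      · exact h.symm
    have hstar : ∀ A ∈ P, A ≠ Z → f A = Z := by
      intro A hA hAZ
      by_cases hAU : A = U
      · subst hAU
        rcases hZUV with h | h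
        · exact absurd h.symm hAZ
        · exact h ▸ rfl
      by_cases hAV : A = V0
      · subst hAV
        -- show f V0 = Z; we know Z = U in this case
        have hZU : Z = U := by
          rcases hZUV with h | h
          · exact h
          · exact absurd h.symm hAZ
        have h1 : f V0 = C1 ∨ f V0 = U := by
          rcases hS V0 hV0P C1 hC1P with h | h | h | h
          · exact absurd h (Ne.symm hC1V)
          · exact absurd (h.trans hZU) hV0U
          · exact Or.inl h
          · exact Or.inr (h.trans hZU)
        have h2 : f V0 = C2 ∨ f V0 = U := by
          rcases hS V0 hV0P C2 hC2P with h | h | h | h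
          · exact absurd h (Ne.symm hC2V)
          · exact absurd (h.trans (hfC2.trans hZU)) hV0U
          · exact Or.inl h
          · exact Or.inr (h.trans (hfC2.trans hZU))
        rcases h1 with h1 | h1
        · rcases h2 with h2 | h2
          · exact absurd (h1.symm.trans h2) hC12
          · exact h2.trans hZU.symm
        · exact h1.trans hZU.symm
      · -- A outside {U, V0}
        by_cases hAC1 : A = C1
        · exact hAC1 ▸ rfl
        rcases hS A hA C1 hC1P with h | h | h | h
        · exact absurd h hAC1
        · exact absurd h hAZ
        · rcases hout A hA hAU hAV with h2 | h2
          · exact absurd (h.symm.trans h2) hC1U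
          · exact absurd (h.symm.trans h2) hC1V
        · exact h
    -- star counting
    have hZne : ¬ (k ≤ Y Z ∧ k ≤ X Z) := by
      have := (hf Z hZP).2.2.2.1
      rw [tkd_iff hs ht] at this
      exact this
    have hAZbound : ∀ A ∈ P, A ≠ Z → (k ≤ X A + X Z ∧ k ≤ Y A + Y Z) := by
      intro A hA hAZ
      have := hXY A hA
      rw [hstar A hA hAZ] at this
      exact this
    rcases (by omega : Y Z < k ∨ X Z < k) with hYZ | hXZ
    · -- count on the right side
      have hterm : ∀ A ∈ P.erase Z, k - Y Z ≤ Y A := by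
        intro A hA
        rw [Finset.mem_erase] at hA
        have := (hAZbound A hA.2 hA.1).2
        omega
      have hsum : (P.card - 1) * (k - Y Z) ≤ t - Y Z := by
        have h1 : ∑ A ∈ P.erase Z, Y A = t - Y Z := by
          have := Finset.add_sum_erase P Y hZP
          omega
        have h2 : (P.erase Z).card * (k - Y Z) ≤ ∑ A ∈ P.erase Z, Y A := by
          calc (P.erase Z).card * (k - Y Z) = ∑ _A ∈ P.erase Z, (k - Y Z) := by
                rw [Finset.sum_const, smul_eq_mul]
          _ ≤ ∑ A ∈ P.erase Z, Y A := Finset.sum_le_sum hterm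
        rw [Finset.card_erase_of_mem hZP] at h2
        omega
      -- derive P.card ≤ t - k + 2
      have hcard : P.card ≤ t - k + 2 := by
        by_contra hcon
        push_neg at hcon
        have hc1 : 1 ≤ k - Y Z := by omega
        have := Nat.mul_le_mul_right (k - Y Z) (show t - k + 2 ≤ P.card - 1 by omega)
        have hmul : (t - k) * (k - Y Z) + 2 * (k - Y Z) ≤ t - Y Z := by
          calc (t - k) * (k - Y Z) + 2 * (k - Y Z) = (t - k + 2) * (k - Y Z) := by ring
          _ ≤ (P.card - 1) * (k - Y Z) := this
          _ ≤ t - Y Z := hsum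
        have hmm : t - k ≤ (t - k) * (k - Y Z) := Nat.le_mul_of_pos_right _ hc1
        omega
      omega
    · -- count on the left side
      have hterm : ∀ A ∈ P.erase Z, k - X Z ≤ X A := by
        intro A hA
        rw [Finset.mem_erase] at hA
        have := (hAZbound A hA.2 hA.1).1
        omega
      have hsum : (P.card - 1) * (k - X Z) ≤ s - X Z := by
        have h1 : ∑ A ∈ P.erase Z, X A = s - X Z := by
          have := Finset.add_sum_erase P X hZP
          omega
        have h2 : (P.erase Z).card * (k - X Z) ≤ ∑ A ∈ P.erase Z, X A := by
          calc (P.erase Z).card * (k - X Z) = ∑ _A ∈ P.erase Z, (k - X Z) := by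
                rw [Finset.sum_const, smul_eq_mul]
          _ ≤ ∑ A ∈ P.erase Z, X A := Finset.sum_le_sum hterm
        rw [Finset.card_erase_of_mem hZP] at h2
        omega
      have hcard : P.card ≤ s - k + 2 := by
        by_contra hcon
        push_neg at hcon
        have hc1 : 1 ≤ k - X Z := by omega
        have := Nat.mul_le_mul_right (k - X Z) (show s - k + 2 ≤ P.card - 1 by omega)
        have hmul : (s - k) * (k - X Z) + 2 * (k - X Z) ≤ s - X Z := by
          calc (s - k) * (k - X Z) + 2 * (k - X Z) = (s - k + 2) * (k - X Z) := by ring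
          _ ≤ (P.card - 1) * (k - X Z) := this
          _ ≤ s - X Z := hsum
        have hmm : s - k ≤ (s - k) * (k - X Z) := Nat.le_mul_of_pos_right _ hc1
        omega
      omega

end TCKaux

open TCKaux in
theorem tck_completeBipartite_large (s t k : ℕ) (hk : 0 < k) (hks : k ≤ s) (hst : s ≤ t)
    (hsk : 3 * k - 1 ≤ s) :
    totalKCoalitionNumber (completeBipartiteGraph (Fin s) (Fin t)) k =
      s + t - 4 * k + 4 := by
  apply le_antisymm
  · refine csSup_le ?_ ?_
    · obtain ⟨P, hP, hcard⟩ := construction hk hks hst hsk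
      exact ⟨s + t - 4*k + 4, P, ⟨hP.1, hP.2.1, hP.2.2.1, hP.2.2.2⟩, hcard⟩
    · rintro n ⟨P, hP, rfl⟩
      exact upper hk hks hst hsk P hP.1 hP.2.1 hP.2.2.1 hP.2.2.2
  · apply le_csSup
    · refine ⟨s + t - 4*k + 4, ?_⟩
      rintro n ⟨P, hP, rfl⟩
      exact upper hk hks hst hsk P hP.1 hP.2.1 hP.2.2.1 hP.2.2.2
    · obtain ⟨P, hP, hcard⟩ := construction hk hks hst hsk
      exact ⟨P, ⟨hP.1, hP.2.1, hP.2.2.1, hP.2.2.2⟩, hcard⟩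
end
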